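/- arXiv:2411.13764 — 10 statements merged into one kernel-verified Lean document; each statement's English description precedes it below -/
import Mathlib

section
/- Let f : [0,1] → [0,∞) be a probability density that is non-decreasing on [0,1], and let s : [0,1] → [0,1] be a measurable selection function with ∫₀¹ s(x) f(x) dx > 0. Then ∫₀¹ s(x) dx > 0, and for every t ∈ [0,1], (∫₀ᵗ s(x) f(x) dx) / (∫₀¹ s(x) f(x) dx) ≤ (∫₀ᵗ s(x) dx) / (∫₀¹ s(x) dx). -/
/-!
For `t ∈ [a, b]` a monotone `f` is at most `f t` on `[a, t]` and at least `f t` on `[t, b]`, so for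
a nonnegative weight `w`
`(∫ₐᵗ w f) (∫ₜᵇ w) ≤ f t (∫ₐᵗ w) (∫ₜᵇ w) ≤ (∫ₐᵗ w) (∫ₜᵇ w f)`.
Adding `(∫ₐᵗ w f) (∫ₐᵗ w)` to both sides gives the cross-multiplied form of the inequality between
the two normalized partial integrals.
-/

open MeasureTheory Set

theorem IntervalIntegrable.bdd_mul {w g : ℝ → ℝ} {a b C : ℝ}
    (hg : IntervalIntegrable g volume a b) (hw : AEStronglyMeasurable w volume)
    (hw_bound : ∀ x ∈ uIcc a b, ‖w x‖ ≤ C) :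
    IntervalIntegrable (fun x => w x * g x) volume a b := by
  rw [intervalIntegrable_iff] at hg ⊢
  exact hg.bdd_mul hw.restrict <| ae_restrict_of_forall_mem measurableSet_uIoc
    fun x hx => hw_bound x (uIoc_subset_uIcc hx)

namespace intervalIntegral

variable {f w : ℝ → ℝ} {a b c : ℝ}

theorem integral_mul_le_const_mul_integral (hab : a ≤ b) (hw : ∀ x ∈ Icc a b, 0 ≤ w x)
    (hw_int : IntervalIntegrable w volume a b)
    (hwf_int : IntervalIntegrable (fun x => w x * f x) volume a b)
    (hfc : ∀ x ∈ Icc a b, f x ≤ c) :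
    ∫ x in a..b, w x * f x ≤ c * ∫ x in a..b, w x := by
  rw [← integral_const_mul]
  refine integral_mono_on hab hwf_int (hw_int.const_mul c) fun x hx => ?_
  rw [mul_comm c]
  exact mul_le_mul_of_nonneg_left (hfc x hx) (hw x hx)

theorem const_mul_integral_le_integral_mul (hab : a ≤ b) (hw : ∀ x ∈ Icc a b, 0 ≤ w x)
    (hw_int : IntervalIntegrable w volume a b)
    (hwf_int : IntervalIntegrable (fun x => w x * f x) volume a b)
    (hcf : ∀ x ∈ Icc a b, c ≤ f x) :
    c * ∫ x in a..b, w x ≤ ∫ x in a..b, w x * f x := by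
  rw [← integral_const_mul]
  refine integral_mono_on hab (hw_int.const_mul c) hwf_int fun x hx => ?_
  rw [mul_comm c]
  exact mul_le_mul_of_nonneg_left (hcf x hx) (hw x hx)

theorem integral_pos_of_integral_mul_pos_of_monotoneOn (hab : a ≤ b)
    (hf : MonotoneOn f (Icc a b)) (hw : ∀ x ∈ Icc a b, 0 ≤ w x)
    (hw_int : IntervalIntegrable w volume a b)
    (hwf_int : IntervalIntegrable (fun x => w x * f x) volume a b)
    (hpos : 0 < ∫ x in a..b, w x * f x) :
    0 < ∫ x in a..b, w x := by
  have hle := integral_mul_le_const_mul_integral hab hw hw_int hwf_int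
    fun x hx => hf hx (right_mem_Icc.2 hab) hx.2
  refine (integral_nonneg hab hw).lt_of_ne fun hzero => ?_
  rw [← hzero, mul_zero] at hle
  exact hle.not_gt hpos

theorem integral_mul_mul_integral_le_of_monotoneOn
    (hf : MonotoneOn f (Icc a b)) (hw : ∀ x ∈ Icc a b, 0 ≤ w x)
    (hw_int : IntervalIntegrable w volume a b)
    (hwf_int : IntervalIntegrable (fun x => w x * f x) volume a b)
    {t : ℝ} (ht : t ∈ Icc a b) :
    (∫ x in a..t, w x * f x) * ∫ x in t..b, w x ≤
      (∫ x in a..t, w x) * ∫ x in t..b, w x * f x := by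
  have hat : Icc a t ⊆ Icc a b := Icc_subset_Icc_right ht.2
  have htb : Icc t b ⊆ Icc a b := Icc_subset_Icc_left ht.1
  have hsub_at : uIcc a t ⊆ uIcc a b := uIcc_subset_uIcc left_mem_uIcc (Icc_subset_uIcc ht)
  have hsub_tb : uIcc t b ⊆ uIcc a b := uIcc_subset_uIcc (Icc_subset_uIcc ht) right_mem_uIcc
  have hleft := integral_mul_le_const_mul_integral ht.1 (fun x hx => hw x (hat hx))
    (hw_int.mono_set hsub_at) (hwf_int.mono_set hsub_at) fun x hx => hf (hat hx) ht hx.2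
  have hright := const_mul_integral_le_integral_mul ht.2 (fun x hx => hw x (htb hx))
    (hw_int.mono_set hsub_tb) (hwf_int.mono_set hsub_tb) fun x hx => hf ht (htb hx) hx.1
  calc (∫ x in a..t, w x * f x) * ∫ x in t..b, w x
      ≤ (f t * ∫ x in a..t, w x) * ∫ x in t..b, w x :=
        mul_le_mul_of_nonneg_right hleft (integral_nonneg ht.2 fun x hx => hw x (htb hx))
    _ = (∫ x in a..t, w x) * (f t * ∫ x in t..b, w x) := by ring
    _ ≤ (∫ x in a..t, w x) * ∫ x in t..b, w x * f x :=
        mul_le_mul_of_nonneg_left hright (integral_nonneg ht.1 fun x hx => hw x (hat hx))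

theorem integral_div_integral_le_of_monotoneOn
    (hf : MonotoneOn f (Icc a b)) (hw : ∀ x ∈ Icc a b, 0 ≤ w x)
    (hw_int : IntervalIntegrable w volume a b)
    (hwf_int : IntervalIntegrable (fun x => w x * f x) volume a b)
    (hpos : 0 < ∫ x in a..b, w x * f x) {t : ℝ} (ht : t ∈ Icc a b) :
    (∫ x in a..t, w x * f x) / (∫ x in a..b, w x * f x) ≤
      (∫ x in a..t, w x) / ∫ x in a..b, w x := by
  have hsub_at : uIcc a t ⊆ uIcc a b := uIcc_subset_uIcc left_mem_uIcc (Icc_subset_uIcc ht)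
  have hsub_tb : uIcc t b ⊆ uIcc a b := uIcc_subset_uIcc (Icc_subset_uIcc ht) right_mem_uIcc
  have hw_pos := integral_pos_of_integral_mul_pos_of_monotoneOn (ht.1.trans ht.2)
    hf hw hw_int hwf_int hpos
  have hcross := integral_mul_mul_integral_le_of_monotoneOn hf hw hw_int hwf_int ht
  rw [div_le_div_iff₀ hpos hw_pos,
    ← integral_add_adjacent_intervals (hw_int.mono_set hsub_at) (hw_int.mono_set hsub_tb),
    ← integral_add_adjacent_intervals (hwf_int.mono_set hsub_at) (hwf_int.mono_set hsub_tb)]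
  linear_combination hcross

end intervalIntegral

theorem selective_dominance_of_monotone_density_general
    (f s : ℝ → ℝ)
    (hf_mono : MonotoneOn f (Set.Icc (0:ℝ) 1))
    (hs_meas : Measurable s)
    (hs01 : ∀ x ∈ Set.Icc (0:ℝ) 1, s x ∈ Set.Icc (0:ℝ) 1)
    (hpos : 0 < ∫ x in (0:ℝ)..1, s x * f x) :
    0 < ∫ x in (0:ℝ)..1, s x ∧
    ∀ t ∈ Set.Icc (0:ℝ) 1,
      (∫ x in (0:ℝ)..t, s x * f x) / (∫ x in (0:ℝ)..1, s x * f x)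
        ≤ (∫ x in (0:ℝ)..t, s x) / (∫ x in (0:ℝ)..1, s x) := by
  have hs_nonneg : ∀ x ∈ Icc (0:ℝ) 1, 0 ≤ s x := fun x hx => (hs01 x hx).1
  have hs_bound : ∀ x ∈ uIcc (0:ℝ) 1, ‖s x‖ ≤ 1 := by
    intro x hx
    rw [uIcc_of_le zero_le_one] at hx
    exact abs_le.2 ⟨by linarith [(hs01 x hx).1], (hs01 x hx).2⟩
  have hf_int : IntervalIntegrable f volume 0 1 :=
    (uIcc_of_le (zero_le_one (α := ℝ)) ▸ hf_mono).intervalIntegrable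
  have hs_int : IntervalIntegrable s volume 0 1 := by
    simpa using intervalIntegrable_const (c := (1:ℝ)) |>.bdd_mul hs_meas.aestronglyMeasurable
      hs_bound
  have hsf_int := hf_int.bdd_mul hs_meas.aestronglyMeasurable hs_bound
  exact ⟨intervalIntegral.integral_pos_of_integral_mul_pos_of_monotoneOn zero_le_one hf_mono
      hs_nonneg hs_int hsf_int hpos,
    fun t => intervalIntegral.integral_div_integral_le_of_monotoneOn hf_mono hs_nonneg hs_int
      hsf_int hpos⟩

/-- Selective dominance inequality for a non-decreasing density. -/
theorem selective_dominance_of_monotone_density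
    (f s : ℝ → ℝ)
    (hf_nonneg : ∀ x ∈ Set.Icc (0:ℝ) 1, 0 ≤ f x)
    (hf_mono : MonotoneOn f (Set.Icc (0:ℝ) 1))
    (hf_int : IntervalIntegrable f volume 0 1)
    (hf_dens : ∫ x in (0:ℝ)..1, f x = 1)
    (hs_meas : Measurable s)
    (hs01 : ∀ x ∈ Set.Icc (0:ℝ) 1, s x ∈ Set.Icc (0:ℝ) 1)
    (hpos : 0 < ∫ x in (0:ℝ)..1, s x * f x) :
    0 < ∫ x in (0:ℝ)..1, s x ∧
    ∀ t ∈ Set.Icc (0:ℝ) 1,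
      (∫ x in (0:ℝ)..t, s x * f x) / (∫ x in (0:ℝ)..1, s x * f x)
        ≤ (∫ x in (0:ℝ)..t, s x) / (∫ x in (0:ℝ)..1, s x) :=
  selective_dominance_of_monotone_density_general f s hf_mono hs_meas hs01 hpos
end

section
/- Let f : [0,1] → [0,∞) be a probability density on [0,1] and let s : [0,1] → [0,1] be measurable with ∫₀¹ s(x) f(x) dx > 0. If for every measurable selection function s with positive selection probability and every t ∈ [0,1] we have (∫₀ᵗ s f)/(∫₀¹ s f) ≤ (∫₀ᵗ s)/(∫₀¹ s), and f is continuous on [0,1], then f is non-decreasing on [0,1]. -/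
/-!
If `f v < f u` for some `u < v`, continuity gives two windows `I = (u, u + ε]` and
`J = (v - ε, v]` of equal length on which `f` is bounded below, resp. above, by constants
`c₁ > c₂`. Selecting exactly these two windows and cutting at `t = u + ε`, the dominance inequality reads
`∫_I f / (∫_I f + ∫_J f) ≤ 1 / 2`, i.e. `∫_I f ≤ ∫_J f`, contradicting `c₂ ε < c₁ ε`.
-/

open MeasureTheory Set Filter Topology

section Windows

variable {f : ℝ → ℝ} {a b c : ℝ}

lemma eventually_nhdsGT_forall_Ioc_lt (hf : ContinuousWithinAt f (Ici a) a) (hc : c < f a) :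
    ∀ᶠ ε in 𝓝[>] 0, ∀ x ∈ Ioc a (a + ε), c < f x := by
  obtain ⟨r, hr, hsub⟩ := mem_nhdsGE_iff_exists_Ico_subset.1 (hf.eventually (lt_mem_nhds hc))
  filter_upwards [Ioo_mem_nhdsGT (sub_pos.2 (mem_Ioi.1 hr))] with ε hε x hx
  exact hsub ⟨hx.1.le, by linarith [hx.2, hε.2]⟩

lemma eventually_nhdsGT_forall_Ioc_gt (hf : ContinuousWithinAt f (Iic b) b) (hc : f b < c) :
    ∀ᶠ ε in 𝓝[>] 0, ∀ x ∈ Ioc (b - ε) b, f x < c := by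
  obtain ⟨l, hl, hsub⟩ := mem_nhdsLE_iff_exists_Ioc_subset.1 (hf.eventually (gt_mem_nhds hc))
  filter_upwards [Ioo_mem_nhdsGT (sub_pos.2 (mem_Iio.1 hl))] with ε hε x hx
  exact hsub ⟨by linarith [hx.1, hε.2], hx.2⟩

lemma exists_Ioc_windows {u v c₁ c₂ : ℝ} (hfu : ContinuousWithinAt f (Ici u) u)
    (hfv : ContinuousWithinAt f (Iic v) v) (huv : u < v) (hc₁ : c₁ < f u) (hc₂ : f v < c₂) :
    ∃ ε > 0, u + ε ≤ v - ε ∧ (∀ x ∈ Ioc u (u + ε), c₁ < f x) ∧ ∀ x ∈ Ioc (v - ε) v, f x < c₂ := by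
  obtain ⟨ε, ⟨⟨hI, hJ⟩, hεuv⟩, hε⟩ := ((((eventually_nhdsGT_forall_Ioc_lt hfu hc₁).and
    (eventually_nhdsGT_forall_Ioc_gt hfv hc₂)).and (eventually_nhdsWithin_of_eventually_nhds
      (eventually_lt_nhds (half_pos (sub_pos.2 huv))))).and self_mem_nhdsWithin).exists
  exact ⟨ε, hε, by linarith, hI, hJ⟩

end Windows

section IndicatorIntegrals

variable {g : ℝ → ℝ} {I J : Set ℝ} {a t b : ℝ}

lemma intervalIntegral_indicator_eq_setIntegral (hab : a ≤ b) (hI : MeasurableSet I)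
    (hIab : I ⊆ Ioc a b) : ∫ x in a..b, I.indicator g x = ∫ x in I, g x := by
  rw [intervalIntegral.integral_of_le hab, setIntegral_indicator hI, inter_eq_right.2 hIab]

lemma intervalIntegral_indicator_union_left (hat : a ≤ t) (hI : I ⊆ Ioc a t)
    (hJ : Disjoint (Ioc a t) J) (hIJ : MeasurableSet (I ∪ J)) :
    ∫ x in a..t, (I ∪ J).indicator g x = ∫ x in I, g x := by
  rw [intervalIntegral.integral_of_le hat, setIntegral_indicator hIJ, inter_union_distrib_left,
    inter_eq_right.2 hI, hJ.inter_eq, union_empty]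

lemma intervalIntegral_indicator_union (hab : a ≤ b) (hIJ : Disjoint I J) (hI : MeasurableSet I)
    (hJ : MeasurableSet J) (hsub : I ∪ J ⊆ Ioc a b) (hgI : IntegrableOn g I)
    (hgJ : IntegrableOn g J) :
    ∫ x in a..b, (I ∪ J).indicator g x = (∫ x in I, g x) + ∫ x in J, g x := by
  rw [intervalIntegral_indicator_eq_setIntegral hab (hI.union hJ) hsub,
    setIntegral_union hIJ hJ hgI hgJ]

end IndicatorIntegrals

def SelectiveDominance (f : ℝ → ℝ) : Prop :=
  ∀ s : ℝ → ℝ, Measurable s → (∀ x ∈ Icc (0:ℝ) 1, s x ∈ Icc (0:ℝ) 1) →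
    0 < ∫ x in (0:ℝ)..1, s x * f x →
    ∀ t ∈ Icc (0:ℝ) 1,
      (∫ x in (0:ℝ)..t, s x * f x) / (∫ x in (0:ℝ)..1, s x * f x)
        ≤ (∫ x in (0:ℝ)..t, s x) / (∫ x in (0:ℝ)..1, s x)

lemma SelectiveDominance.setIntegral_Ioc_le {f : ℝ → ℝ} (hdom : SelectiveDominance f)
    (hf_int : IntervalIntegrable f volume 0 1) (hf_nonneg : ∀ x ∈ Icc (0:ℝ) 1, 0 ≤ f x)
    {a b ε : ℝ} (ha : 0 ≤ a) (hb : b ≤ 1) (hε : 0 < ε) (hab : a + ε ≤ b - ε) :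
    ∫ x in Ioc a (a + ε), f x ≤ ∫ x in Ioc (b - ε) b, f x := by
  set I := Ioc a (a + ε)
  set J := Ioc (b - ε) b
  have ht : a + ε ∈ Icc (0:ℝ) 1 := ⟨by linarith, by linarith⟩
  have hI : I ⊆ Ioc 0 (a + ε) := Ioc_subset_Ioc_left ha
  have hJ : J ⊆ Ioc (a + ε) 1 := Ioc_subset_Ioc hab hb
  have hIJ : Disjoint I J := Ioc_disjoint_Ioc_of_le hab
  have hsub : I ∪ J ⊆ Ioc 0 1 := union_subset (hI.trans (Ioc_subset_Ioc_right ht.2))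
    (hJ.trans (Ioc_subset_Ioc_left ht.1))
  have hfI : IntegrableOn f I := hf_int.1.mono_set (subset_union_left.trans hsub)
  have hfJ : IntegrableOn f J := hf_int.1.mono_set (subset_union_right.trans hsub)
  have hB : 0 ≤ ∫ x in J, f x := setIntegral_nonneg measurableSet_Ioc fun x hx ↦
    hf_nonneg x (Ioc_subset_Icc_self (hsub (subset_union_right hx)))
  -- If no mass is selected the hypothesis is void, but then `∫_I f ≤ 0 ≤ ∫_J f` anyway.
  rcases le_or_gt ((∫ x in I, f x) + ∫ x in J, f x) 0 with hnonpos | hpos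
  · linarith
  have hm : MeasurableSet (I ∪ J) := measurableSet_Ioc.union measurableSet_Ioc
  have hdisj : Disjoint (Ioc 0 (a + ε)) J := Ioc_disjoint_Ioc_of_le hab
  have hsf (x : ℝ) : (I ∪ J).indicator (fun _ ↦ 1) x * f x = (I ∪ J).indicator f x := by
    by_cases hx : x ∈ I ∪ J <;> simp [hx]
  have hf_total : ∫ x in (0:ℝ)..1, (I ∪ J).indicator f x = (∫ x in I, f x) + ∫ x in J, f x :=
    intervalIntegral_indicator_union zero_le_one hIJ measurableSet_Ioc measurableSet_Ioc hsub
      hfI hfJ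
  have key := hdom ((I ∪ J).indicator fun _ ↦ 1) (measurable_const.indicator hm)
    (fun x _ ↦ by by_cases hx : x ∈ I ∪ J <;> simp [hx]) (by simpa only [hsf, hf_total]) (a + ε) ht
  simp only [hsf] at key
  rw [hf_total, intervalIntegral_indicator_union zero_le_one hIJ measurableSet_Ioc measurableSet_Ioc
      hsub (integrableOn_const measure_Ioc_lt_top.ne) (integrableOn_const measure_Ioc_lt_top.ne),
    intervalIntegral_indicator_union_left ht.1 hI hdisj hm,
    intervalIntegral_indicator_union_left ht.1 hI hdisj hm] at key
  have hI_len : ∫ _ in I, (1:ℝ) = ε := by simp [I, hε.le]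
  have hJ_len : ∫ _ in J, (1:ℝ) = ε := by simp [J, hε.le]
  rw [hI_len, hJ_len, show ε / (ε + ε) = 1 / 2 by field_simp; norm_num, div_le_iff₀ hpos] at key
  linarith

theorem monotone_density_of_selective_dominance_general
    (f : ℝ → ℝ)
    (hf_nonneg : ∀ x ∈ Set.Icc (0:ℝ) 1, 0 ≤ f x)
    (hf_int : IntervalIntegrable f volume 0 1)
    (hf_cont : ContinuousOn f (Set.Icc (0:ℝ) 1))
    (hdom : ∀ s : ℝ → ℝ, Measurable s → (∀ x ∈ Set.Icc (0:ℝ) 1, s x ∈ Set.Icc (0:ℝ) 1) →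
      0 < ∫ x in (0:ℝ)..1, s x * f x →
      ∀ t ∈ Set.Icc (0:ℝ) 1,
        (∫ x in (0:ℝ)..t, s x * f x) / (∫ x in (0:ℝ)..1, s x * f x)
          ≤ (∫ x in (0:ℝ)..t, s x) / (∫ x in (0:ℝ)..1, s x)) :
    MonotoneOn f (Set.Icc (0:ℝ) 1) := by
  intro u hu v hv huv
  by_contra! hvu
  have huv : u < v := huv.lt_of_ne (by rintro rfl; exact hvu.false)
  obtain ⟨c₂, hvc₂, hc₂u⟩ := exists_between hvu
  obtain ⟨c₁, hc₂₁, hc₁u⟩ := exists_between hc₂u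
  have huv_sub : Icc u v ⊆ Icc 0 1 := Icc_subset_Icc hu.1 hv.2
  obtain ⟨ε, hε, hεuv, hfI, hfJ⟩ := exists_Ioc_windows
    ((continuousWithinAt_Icc_iff_Ici huv).1 ((hf_cont u hu).mono huv_sub))
    ((continuousWithinAt_Icc_iff_Iic huv).1 ((hf_cont v hv).mono huv_sub)) huv hc₁u hvc₂
  have hmass := SelectiveDominance.setIntegral_Ioc_le hdom hf_int hf_nonneg hu.1 hv.2 hε hεuv
  have hI : c₁ * ε ≤ ∫ x in Ioc u (u + ε), f x := by
    simpa [hε.le] using setIntegral_ge_of_const_le_real measurableSet_Ioc measure_Ioc_lt_top.ne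
      (fun x hx ↦ (hfI x hx).le) (hf_int.1.mono_set (Ioc_subset_Ioc hu.1 (by linarith [hv.2])))
  have hJ : ∫ x in Ioc (v - ε) v, f x ≤ c₂ * ε := by
    simpa [hε.le, mul_comm] using setIntegral_mono_on
      (hf_int.1.mono_set (Ioc_subset_Ioc (by linarith [hu.1]) hv.2))
      (integrableOn_const measure_Ioc_lt_top.ne) measurableSet_Ioc (fun x hx ↦ (hfJ x hx).le)
  linarith [mul_lt_mul_of_pos_right hc₂₁ hε]

/-- Converse: if the selective dominance inequality holds for all
selection functions, a continuous density must be non-decreasing. -/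
theorem monotone_density_of_selective_dominance
    (f : ℝ → ℝ)
    (hf_nonneg : ∀ x ∈ Set.Icc (0:ℝ) 1, 0 ≤ f x)
    (hf_int : IntervalIntegrable f volume 0 1)
    (hf_dens : ∫ x in (0:ℝ)..1, f x = 1)
    (hf_cont : ContinuousOn f (Set.Icc (0:ℝ) 1))
    (hdom : ∀ s : ℝ → ℝ, Measurable s → (∀ x ∈ Set.Icc (0:ℝ) 1, s x ∈ Set.Icc (0:ℝ) 1) →
      0 < ∫ x in (0:ℝ)..1, s x * f x →
      ∀ t ∈ Set.Icc (0:ℝ) 1,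
        (∫ x in (0:ℝ)..t, s x * f x) / (∫ x in (0:ℝ)..1, s x * f x)
          ≤ (∫ x in (0:ℝ)..t, s x) / (∫ x in (0:ℝ)..1, s x)) :
    MonotoneOn f (Set.Icc (0:ℝ) 1) :=
  monotone_density_of_selective_dominance_general f hf_nonneg hf_int hf_cont hdom
end

section
/- Let p be a random variable with values in [0,1] with a non-decreasing density f under the null, and let s : [0,1] → [0,1] be a selection function with ∫₀¹ s(x) dx > 0. Define the selective p-value p_sel = (∫₀^p s(x) dx)/(∫₀¹ s(x) dx). Then conditional on the selection event S = 1 (where P(S=1 | p = x) = s(x) and P(S=1) > 0), for all t ∈ [0,1]: P(p_sel ≤ t | S = 1) ≤ t. -/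
open MeasureTheory ProbabilityTheory Set

/-- The selective p-value `p_sel = (∫₀^p s)/(∫₀¹ s)` is super-uniform
conditional on selection, when `p` has a non-decreasing density `f` on `[0,1]` and
selection happens with conditional probability `s(p)`. -/
theorem selective_p_value_super_uniform
    {Ω : Type*} [MeasurableSpace Ω] (μpr : Measure Ω) [IsProbabilityMeasure μpr]
    (p : Ω → ℝ) (hp : Measurable p)
    (f : ℝ → ℝ) (hf_nonneg : ∀ x ∈ Set.Icc (0:ℝ) 1, 0 ≤ f x)
    (hf_mono : MonotoneOn f (Set.Icc (0:ℝ) 1))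
    (hlaw : μpr.map p = (volume.restrict (Set.Icc (0:ℝ) 1)).withDensity
      (fun x => ENNReal.ofReal (f x)))
    (s : ℝ → ℝ) (hs_meas : Measurable s)
    (hs01 : ∀ x ∈ Set.Icc (0:ℝ) 1, s x ∈ Set.Icc (0:ℝ) 1)
    (hs_pos : 0 < ∫ x in (0:ℝ)..1, s x)
    (S : Set Ω) (hS : MeasurableSet S)
    -- the joint law of (p, S): selection happens with probability s(x) given p = x
    (hjoint : ∀ A : Set ℝ, MeasurableSet A →
      μpr (S ∩ p ⁻¹' A) = ENNReal.ofReal (∫ x in A ∩ Set.Icc (0:ℝ) 1, s x * f x))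
    (hSpos : 0 < μpr S) :
    ∀ t ∈ Set.Icc (0:ℝ) 1,
      μpr[|S] {ω | (∫ x in (0:ℝ)..(p ω), s x) / (∫ x in (0:ℝ)..1, s x) ≤ t}
        ≤ ENNReal.ofReal t := by
  intro t ht
  obtain ⟨ht0, ht1⟩ := ht
  have hIccfin : volume (Icc (0:ℝ) 1) ≠ ⊤ := by
    simp [Real.volume_Icc]
  -- integrability of s on [0,1]
  have hs_int : IntegrableOn s (Icc (0:ℝ) 1) volume := by
    apply Measure.integrableOn_of_bounded hIccfin hs_meas.aestronglyMeasurable (M := 1)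
    filter_upwards [ae_restrict_mem measurableSet_Icc] with x hx
    have h := hs01 x hx
    rw [Real.norm_eq_abs, abs_le]
    exact ⟨by linarith [h.1], h.2⟩
  have hf_aem : AEMeasurable f (volume.restrict (Icc (0:ℝ) 1)) :=
    aemeasurable_restrict_of_monotoneOn measurableSet_Icc hf_mono
  -- integrability of s*f on [0,1]
  have hsf_int : IntegrableOn (fun x => s x * f x) (Icc (0:ℝ) 1) volume := by
    refine ⟨(hs_meas.aemeasurable.restrict.mul hf_aem).aestronglyMeasurable,
      HasFiniteIntegral.restrict_of_bounded (C := f 1) (lt_top_iff_ne_top.2 hIccfin) ?_⟩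
    filter_upwards [ae_restrict_mem measurableSet_Icc] with x hx
    have hsx := hs01 x hx
    have hfx := hf_nonneg x hx
    have hfx1 : f x ≤ f 1 := hf_mono hx (right_mem_Icc.2 zero_le_one) hx.2
    rw [Real.norm_eq_abs, abs_of_nonneg (mul_nonneg hsx.1 hfx)]
    calc s x * f x ≤ 1 * f 1 := by
          apply mul_le_mul hsx.2 hfx1 hfx zero_le_one
      _ = f 1 := one_mul _
  have hs_ii : ∀ u ∈ Icc (0:ℝ) 1, ∀ v ∈ Icc (0:ℝ) 1, IntervalIntegrable s volume u v :=
    fun u hu v hv => (hs_int.mono_set (uIcc_subset_Icc hu hv)).intervalIntegrable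
  have hsf_ii : ∀ u ∈ Icc (0:ℝ) 1, ∀ v ∈ Icc (0:ℝ) 1,
      IntervalIntegrable (fun x => s x * f x) volume u v :=
    fun u hu v hv => (hsf_int.mono_set (uIcc_subset_Icc hu hv)).intervalIntegrable
  have h0m : (0:ℝ) ∈ Icc (0:ℝ) 1 := left_mem_Icc.2 zero_le_one
  have h1m : (1:ℝ) ∈ Icc (0:ℝ) 1 := right_mem_Icc.2 zero_le_one
  set c := ∫ x in (0:ℝ)..1, s x with hc
  set G : ℝ → ℝ := fun u => ∫ x in (0:ℝ)..u, s x with hGdef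
  have hG_mono : MonotoneOn G (Icc (0:ℝ) 1) := by
    intro u hu v hv huv
    have hadd : G u + ∫ x in u..v, s x = G v :=
      intervalIntegral.integral_add_adjacent_intervals (hs_ii 0 h0m u hu) (hs_ii u hu v hv)
    have hnn : 0 ≤ ∫ x in u..v, s x :=
      intervalIntegral.integral_nonneg huv
        (fun x hx => (hs01 x ⟨hu.1.trans hx.1, hx.2.trans hv.2⟩).1)
    linarith
  have hc_pos : 0 < c := hs_pos
  -- the threshold u₀
  set T : Set ℝ := Icc (0:ℝ) 1 ∩ G ⁻¹' (Iic (t * c)) with hTdef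
  have hG0 : G 0 = 0 := intervalIntegral.integral_same
  have hT0 : (0:ℝ) ∈ T := ⟨h0m, by
    simp only [mem_preimage, mem_Iic, hG0]
    positivity⟩
  have hTbdd : BddAbove T := ⟨1, fun u hu => hu.1.2⟩
  have hG_cont : ContinuousOn G (Icc (0:ℝ) 1) := by
    have := intervalIntegral.continuousOn_primitive_interval
      (a := (0:ℝ)) (b := 1) (μ := volume) (f := s)
      (by rwa [uIcc_of_le zero_le_one])
    rwa [uIcc_of_le zero_le_one] at this
  have hTclosed : IsClosed T :=
    hG_cont.preimage_isClosed_of_isClosed isClosed_Icc isClosed_Iic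
  set u₀ := sSup T with hu₀def
  have hu₀T : u₀ ∈ T := hTclosed.csSup_mem ⟨0, hT0⟩ hTbdd
  have hu₀Icc : u₀ ∈ Icc (0:ℝ) 1 := hu₀T.1
  have ha_le : G u₀ ≤ t * c := hu₀T.2
  -- basic decompositions
  have hab : G u₀ + (∫ x in u₀..1, s x) = c :=
    intervalIntegral.integral_add_adjacent_intervals (hs_ii 0 h0m u₀ hu₀Icc)
      (hs_ii u₀ hu₀Icc 1 h1m)
  have hb_nn : 0 ≤ ∫ x in u₀..1, s x :=
    intervalIntegral.integral_nonneg hu₀Icc.2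
      (fun x hx => (hs01 x ⟨hu₀Icc.1.trans hx.1, hx.2⟩).1)
  have ha_nn : 0 ≤ G u₀ :=
    intervalIntegral.integral_nonneg hu₀Icc.1
      (fun x hx => (hs01 x ⟨hx.1, hx.2.trans hu₀Icc.2⟩).1)
  set IA := ∫ x in (0:ℝ)..u₀, s x * f x with hIA
  set IB := ∫ x in u₀..(1:ℝ), s x * f x with hIB
  have hABsum : IA + IB = ∫ x in (0:ℝ)..1, s x * f x :=
    intervalIntegral.integral_add_adjacent_intervals (hsf_ii 0 h0m u₀ hu₀Icc)
      (hsf_ii u₀ hu₀Icc 1 h1m)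
  have hfu₀ : 0 ≤ f u₀ := hf_nonneg u₀ hu₀Icc
  have hIA_le : IA ≤ f u₀ * G u₀ := by
    have : IA ≤ ∫ x in (0:ℝ)..u₀, f u₀ * s x := by
      apply intervalIntegral.integral_mono_on hu₀Icc.1 (hsf_ii 0 h0m u₀ hu₀Icc)
        ((hs_ii 0 h0m u₀ hu₀Icc).const_mul _)
      intro x hx
      have hxm : x ∈ Icc (0:ℝ) 1 := ⟨hx.1, hx.2.trans hu₀Icc.2⟩
      have := hf_mono hxm hu₀Icc hx.2
      have hsx := (hs01 x hxm).1
      nlinarith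
    rwa [intervalIntegral.integral_const_mul] at this
  have hIB_ge : f u₀ * (∫ x in u₀..1, s x) ≤ IB := by
    have : (∫ x in u₀..(1:ℝ), f u₀ * s x) ≤ IB := by
      apply intervalIntegral.integral_mono_on hu₀Icc.2
        ((hs_ii u₀ hu₀Icc 1 h1m).const_mul _) (hsf_ii u₀ hu₀Icc 1 h1m)
      intro x hx
      have hxm : x ∈ Icc (0:ℝ) 1 := ⟨hu₀Icc.1.trans hx.1, hx.2⟩
      have := hf_mono hu₀Icc hxm hx.1
      have hsx := (hs01 x hxm).1
      nlinarith
    rwa [intervalIntegral.integral_const_mul] at this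
  -- the key real inequality
  have key : IA ≤ t * (IA + IB) := by
    have k1 : (1 - t) * IA ≤ (1 - t) * (f u₀ * G u₀) :=
      mul_le_mul_of_nonneg_left hIA_le (by linarith)
    have k2 : f u₀ * G u₀ ≤ f u₀ * (t * c) := mul_le_mul_of_nonneg_left ha_le hfu₀
    have k2' : (1 - t) * (f u₀ * G u₀) ≤ (1 - t) * (f u₀ * (t * c)) :=
      mul_le_mul_of_nonneg_left k2 (by linarith)
    have k3 : (1 - t) * (f u₀ * (t * c)) = t * (f u₀ * ((1 - t) * c)) := by ring
    have k4 : f u₀ * ((1 - t) * c) ≤ f u₀ * (∫ x in u₀..1, s x) :=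
      mul_le_mul_of_nonneg_left (by linarith) hfu₀
    have k5 : t * (f u₀ * ((1 - t) * c)) ≤ t * (f u₀ * (∫ x in u₀..1, s x)) :=
      mul_le_mul_of_nonneg_left k4 ht0
    have k6 : t * (f u₀ * (∫ x in u₀..1, s x)) ≤ t * IB := mul_le_mul_of_nonneg_left hIB_ge ht0
    have k7 : t * (IA + IB) = t * IA + t * IB := by ring
    have k8 : (1 - t) * IA = IA - t * IA := by ring
    linarith
  -- measure computations
  have hμS : μpr S = ENNReal.ofReal (∫ x in Icc (0:ℝ) 1, s x * f x) := by
    have h := hjoint univ MeasurableSet.univ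
    simpa using h
  have hμSE : μpr (S ∩ p ⁻¹' (Iic u₀)) = ENNReal.ofReal IA := by
    rw [hjoint (Iic u₀) measurableSet_Iic]
    have hset : Iic u₀ ∩ Icc (0:ℝ) 1 = Icc (0:ℝ) u₀ := by
      ext x
      simp only [mem_inter_iff, mem_Iic, mem_Icc]
      exact ⟨fun h => ⟨h.2.1, h.1⟩, fun h => ⟨h.2, h.1, h.2.trans hu₀Icc.2⟩⟩
    rw [hset, hIA, intervalIntegral.integral_of_le hu₀Icc.1, integral_Icc_eq_integral_Ioc]
  -- p ∈ [0,1] almost surely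
  have hae : ∀ᵐ ω ∂μpr, p ω ∈ Icc (0:ℝ) 1 := by
    rw [ae_iff]
    have hpre : {ω | ¬ p ω ∈ Icc (0:ℝ) 1} = p ⁻¹' (Icc (0:ℝ) 1)ᶜ := rfl
    rw [hpre, ← Measure.map_apply hp measurableSet_Icc.compl, hlaw,
      withDensity_apply _ measurableSet_Icc.compl,
      Measure.restrict_restrict measurableSet_Icc.compl]
    simp
  -- identify the event with {p ≤ u₀} up to null sets
  have hevent : μpr (S ∩ {ω | G (p ω) / c ≤ t}) = μpr (S ∩ p ⁻¹' (Iic u₀)) := by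
    apply measure_congr
    filter_upwards [hae] with ω hω
    simp only [eq_iff_iff, mem_inter_iff, mem_setOf_eq, mem_preimage, mem_Iic]
    constructor
    · rintro ⟨hωS, hle⟩
      simp only [mem_setOf_eq] at hle
      refine ⟨hωS, le_csSup hTbdd ⟨hω, ?_⟩⟩
      simp only [mem_preimage, mem_Iic]
      rwa [div_le_iff₀ hc_pos] at hle
    · rintro ⟨hωS, hle⟩
      simp only [mem_preimage, mem_Iic] at hle
      refine ⟨hωS, ?_⟩
      simp only [mem_setOf_eq]
      rw [div_le_iff₀ hc_pos]
      exact (hG_mono hω hu₀Icc hle).trans ha_le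
  -- put it together
  rw [cond_apply hS μpr]
  rw [ENNReal.inv_mul_le_iff (ne_of_gt hSpos) (measure_ne_top _ _)]
  have hμSE' : μpr (S ∩ {ω | (∫ x in (0:ℝ)..(p ω), s x) / c ≤ t}) = ENNReal.ofReal IA := by
    have : {ω | (∫ x in (0:ℝ)..(p ω), s x) / c ≤ t} = {ω | G (p ω) / c ≤ t} := rfl
    rw [this, hevent, hμSE]
  have hD_nn : 0 ≤ ∫ x in Icc (0:ℝ) 1, s x * f x :=
    setIntegral_nonneg measurableSet_Icc fun x hx => mul_nonneg (hs01 x hx).1 (hf_nonneg x hx)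
  rw [hμSE', hμS, ← ENNReal.ofReal_mul hD_nn]
  apply ENNReal.ofReal_le_ofReal
  have hfull : (∫ x in Icc (0:ℝ) 1, s x * f x) = IA + IB := by
    rw [hABsum, intervalIntegral.integral_of_le zero_le_one, integral_Icc_eq_integral_Ioc]
  rw [hfull, mul_comm]
  exact key
end

section
/- Let p be uniformly distributed on [0,1], let s : [0,1] → [0,1] be a selection function with ∫₀¹ s(x) dx > 0, and let S be Bernoulli with P(S = 1 | p = x) = s(x). Then for all t ∈ [0,1], P(p_sel ≤ t | S = 1) = t, where p_sel = (∫₀^p s(x) dx)/(∫₀¹ s(x) dx). -/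
open MeasureTheory ProbabilityTheory Set

/-- If `p` is exactly uniform on `[0,1]`, the selective p-value is exactly
uniform conditional on selection. -/
theorem selective_p_value_exact_uniform
    {Ω : Type*} [MeasurableSpace Ω] (μpr : Measure Ω) [IsProbabilityMeasure μpr]
    (p : Ω → ℝ) (hp : Measurable p)
    (hlaw : μpr.map p = volume.restrict (Set.Icc (0:ℝ) 1))
    (s : ℝ → ℝ) (hs_meas : Measurable s)
    (hs01 : ∀ x ∈ Set.Icc (0:ℝ) 1, s x ∈ Set.Icc (0:ℝ) 1)
    (hs_pos : 0 < ∫ x in (0:ℝ)..1, s x)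
    (S : Set Ω) (hS : MeasurableSet S)
    -- the joint law of (p, S): selection happens with probability s(x) given p = x
    (hjoint : ∀ A : Set ℝ, MeasurableSet A →
      μpr (S ∩ p ⁻¹' A) = ENNReal.ofReal (∫ x in A ∩ Set.Icc (0:ℝ) 1, s x))
    (hSpos : 0 < μpr S) :
    ∀ t ∈ Set.Icc (0:ℝ) 1,
      μpr[|S] {ω | (∫ x in (0:ℝ)..(p ω), s x) / (∫ x in (0:ℝ)..1, s x) ≤ t}
        = ENNReal.ofReal t := by
  intro t ht
  set T : ℝ := ∫ x in (0:ℝ)..1, s x with hT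
  set F : ℝ → ℝ := fun u => ∫ x in (0:ℝ)..u, s x with hF
  -- integrability of s on [0,1]
  have hint : IntegrableOn s (Icc (0:ℝ) 1) volume := by
    refine Measure.integrableOn_of_bounded (M := 1) (by simp) hs_meas.aestronglyMeasurable ?_
    filter_upwards [ae_restrict_mem measurableSet_Icc] with x hx
    have := hs01 x hx
    rw [Real.norm_eq_abs, abs_le]
    exact ⟨by linarith [this.1], this.2⟩
  have hII : ∀ a b : ℝ, a ∈ Icc (0:ℝ) 1 → b ∈ Icc (0:ℝ) 1 → IntervalIntegrable s volume a b := by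
    intro a b ha hb
    exact (hint.mono (uIcc_subset_Icc ha hb) le_rfl).intervalIntegrable
  -- F is monotone on [0,1]
  have hmono : ∀ a b : ℝ, a ∈ Icc (0:ℝ) 1 → b ∈ Icc (0:ℝ) 1 → a ≤ b → F a ≤ F b := by
    intro a b ha hb hab
    have h1 : F a + ∫ x in a..b, s x = F b :=
      intervalIntegral.integral_add_adjacent_intervals
        (hII 0 a (by simp) ha) (hII a b ha hb)
    have h2 : 0 ≤ ∫ x in a..b, s x := by
      apply intervalIntegral.integral_nonneg hab
      intro u hu
      exact (hs01 u ⟨le_trans ha.1 hu.1, le_trans hu.2 hb.2⟩).1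
    linarith
  -- F is continuous on [0,1]
  have hcont : ContinuousOn F (Icc (0:ℝ) 1) := by
    have := intervalIntegral.continuousOn_primitive_interval (a := 0) (b := 1) (μ := volume) (f := s)
      (by rwa [uIcc_of_le (by norm_num : (0:ℝ) ≤ 1)])
    rwa [uIcc_of_le (by norm_num : (0:ℝ) ≤ 1)] at this
  have hF0 : F 0 = 0 := intervalIntegral.integral_same
  have hF1 : F 1 = T := rfl
  have htT : t * T ∈ Icc (F 0) (F 1) := by
    constructor
    · rw [hF0]; exact mul_nonneg ht.1 hs_pos.le
    · rw [hF1]; nlinarith [ht.2, hs_pos]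
  obtain ⟨c, hc, hFc⟩ := intermediate_value_Icc (by norm_num : (0:ℝ) ≤ 1) hcont htT
  -- the sup
  set K : Set ℝ := {u | u ∈ Icc (0:ℝ) 1 ∧ F u ≤ t * T} with hK
  have hKne : K.Nonempty := ⟨c, hc, hFc.le⟩
  have hKbdd : BddAbove K := ⟨1, fun u hu => hu.1.2⟩
  have hKclosed : IsClosed K := by
    have : K = Icc (0:ℝ) 1 ∩ F ⁻¹' (Iic (t * T)) := by ext u; simp [hK]
    rw [this]
    exact hcont.preimage_isClosed_of_isClosed isClosed_Icc isClosed_Iic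
  set v : ℝ := sSup K with hv
  have hvK : v ∈ K := hKclosed.csSup_mem hKne hKbdd
  have hcv : c ≤ v := le_csSup hKbdd ⟨hc, hFc.le⟩
  have hFv : F v = t * T := le_antisymm hvK.2 (hFc ▸ hmono c v hc hvK.1 hcv)
  -- p lands in [0,1] a.s.
  have hIccnull : μpr (p ⁻¹' (Icc (0:ℝ) 1)ᶜ) = 0 := by
    have : μpr.map p (Icc (0:ℝ) 1)ᶜ = 0 := by
      rw [hlaw, Measure.restrict_apply measurableSet_Icc.compl]
      simp
    rwa [Measure.map_apply hp measurableSet_Icc.compl] at this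
  set E : Set Ω := {ω | F (p ω) / T ≤ t} with hE
  have hEeq : μpr (S ∩ E) = μpr (S ∩ p ⁻¹' (Icc 0 v)) := by
    apply measure_congr
    rw [Filter.eventuallyEq_set]
    have h0 : ∀ᵐ ω ∂μpr, p ω ∈ Icc (0:ℝ) 1 := by
      have := ae_iff.mpr hIccnull
      filter_upwards [this] with ω hω
      simpa using hω
    filter_upwards [h0] with ω hω
    constructor
    · rintro ⟨hωS, hωE⟩
      refine ⟨hωS, ?_⟩
      have hle : F (p ω) ≤ t * T := by
        have := (div_le_iff₀ hs_pos).mp hωE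
        linarith
      exact ⟨hω.1, le_csSup hKbdd ⟨hω, hle⟩⟩
    · rintro ⟨hωS, hωv⟩
      refine ⟨hωS, ?_⟩
      have : F (p ω) ≤ t * T := hFv ▸ hmono (p ω) v hω hvK.1 hωv.2
      exact (div_le_iff₀ hs_pos).mpr (by linarith)
  -- compute the two measures
  have hμSE : μpr (S ∩ E) = ENNReal.ofReal (t * T) := by
    rw [hEeq, hjoint _ measurableSet_Icc]
    congr 1
    have hsub : Icc (0:ℝ) v ∩ Icc 0 1 = Icc 0 v := by
      apply inter_eq_left.mpr
      exact Icc_subset_Icc le_rfl hvK.1.2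
    rw [hsub]
    have hIv : (∫ x in Icc (0:ℝ) v, s x) = F v := by
      simp only [hF]
      rw [intervalIntegral.integral_of_le hvK.1.1, integral_Icc_eq_integral_Ioc]
    rw [hIv, hFv]
  have hμS : μpr S = ENNReal.ofReal T := by
    have := hjoint univ MeasurableSet.univ
    simp only [preimage_univ, inter_univ, univ_inter] at this
    rw [this, hT, intervalIntegral.integral_of_le (by norm_num : (0:ℝ) ≤ 1),
      integral_Icc_eq_integral_Ioc]
  -- conditional probability
  rw [cond_apply hS]
  rw [show S ∩ E = S ∩ E from rfl, hμSE, hμS]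
  rw [ENNReal.ofReal_mul ht.1, mul_comm (ENNReal.ofReal t) (ENNReal.ofReal T), ← mul_assoc,
    ENNReal.inv_mul_cancel (by simpa using hs_pos) ENNReal.ofReal_ne_top, one_mul]
end

section
/- Let p₁, …, pₙ be independent random variables on [0,1], where p_j is uniform on [0,1] and each p_i for i ≠ j has a non-decreasing density on [0,1]. Let S be the event that p_j < min_{i ≠ j} p_i. If P(S) > 0, then for any α ∈ [0,1], P(p_j ≤ α · min_{i ≠ j} p_i | S) ≤ α. -/
/-!
Let `M = min_{i ≠ j} p_i`. It lies in `[0, 1]` almost surely and is independent of `p_j`, so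
integrating the uniform law of `p_j` against the law of `M` gives
`P(p_j ≤ α M) = α E[M] = α P(p_j < M)`. Since `{p_j < M} ⊆ S`, this yields
`P(p_j ≤ α M, S) ≤ α P(S)`.
-/

open MeasureTheory ProbabilityTheory Set

lemma Real.iInf_mem_Icc_zero_one {ι : Sort*} {f : ι → ℝ} (hf : ∀ i, f i ∈ Icc (0 : ℝ) 1) :
    ⨅ i, f i ∈ Icc (0 : ℝ) 1 := by
  refine ⟨Real.iInf_nonneg fun i => (hf i).1, ?_⟩
  rcases isEmpty_or_nonempty ι with _ | ⟨⟨i⟩⟩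
  · simp [Real.iInf_of_isEmpty]
  · exact (ciInf_le ⟨0, forall_mem_range.2 fun i => (hf i).1⟩ i).trans (hf i).2

lemma volume_restrict_Icc_Iic {a b x : ℝ} (hx : x ∈ Icc a b) :
    volume.restrict (Icc a b) (Iic x) = ENNReal.ofReal (x - a) := by
  have hinter : Iic x ∩ Icc a b = Icc a x := by
    ext; simp only [mem_inter_iff, mem_Iic, mem_Icc]; grind
  rw [Measure.restrict_apply measurableSet_Iic, hinter, Real.volume_Icc]

lemma volume_restrict_Icc_Iio {a b x : ℝ} (hx : x ∈ Icc a b) :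
    volume.restrict (Icc a b) (Iio x) = ENNReal.ofReal (x - a) := by
  have hinter : Iio x ∩ Icc a b = Ico a x := by
    ext; simp only [mem_inter_iff, mem_Iio, mem_Icc, mem_Ico]; grind
  rw [Measure.restrict_apply measurableSet_Iio, hinter, Real.volume_Ico]

theorem ProbabilityTheory.iIndepFun.indepFun_iInf_ne {Ω ι : Type*} [MeasurableSpace Ω]
    {μ : Measure Ω} [Fintype ι] {X : ι → Ω → ℝ} (hX : iIndepFun X μ)
    (hmeas : ∀ i, Measurable (X i)) (j : ι) :
    IndepFun (X j) (fun ω => ⨅ i : {i // i ≠ j}, X i ω) μ := by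
  classical
  exact (hX.indepFun_finset {j} {j}ᶜ disjoint_compl_right hmeas).comp
    (measurable_pi_apply (⟨j, Finset.mem_singleton_self j⟩ : ({j} : Finset ι)))
    (.iInf fun _ => measurable_pi_apply _ :
      Measurable fun g : ({j}ᶜ : Finset ι) → ℝ => ⨅ i : {i // i ≠ j}, g ⟨i, by simp [i.2]⟩)

theorem ProbabilityTheory.IndepFun.measure_preimage_eq_lintegral {Ω α β : Type*}
    [MeasurableSpace Ω] [MeasurableSpace α] [MeasurableSpace β] {μ : Measure Ω}
    [IsFiniteMeasure μ] {X : Ω → α} {Y : Ω → β} (h : IndepFun X Y μ) (hX : Measurable X)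
    (hY : Measurable Y) {B : Set (α × β)} (hB : MeasurableSet B) :
    μ ((fun ω => (X ω, Y ω)) ⁻¹' B) = ∫⁻ x, μ.map Y (Prod.mk x ⁻¹' B) ∂μ.map X := by
  rw [← Measure.map_apply (hX.prodMk hY) hB,
    h.map_prod_eq_prod_map_map hX.aemeasurable hY.aemeasurable, Measure.prod_apply hB]

theorem ProbabilityTheory.IndepFun.measure_le_mul_eq_mul_measure_lt_of_uniform {Ω : Type*}
    [MeasurableSpace Ω] {μ : Measure Ω} [IsFiniteMeasure μ] {X Y : Ω → ℝ}
    (hXY : IndepFun Y X μ) (hX : Measurable X) (hY : Measurable Y)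
    (hunif : μ.map X = volume.restrict (Icc 0 1)) (hY01 : ∀ᵐ ω ∂μ, Y ω ∈ Icc (0 : ℝ) 1)
    {c : ℝ} (hc : c ∈ Icc (0 : ℝ) 1) :
    μ {ω | X ω ≤ c * Y ω} = ENNReal.ofReal c * μ {ω | X ω < Y ω} := by
  have hν : ∀ᵐ y ∂μ.map Y, y ∈ Icc (0 : ℝ) 1 :=
    (ae_map_iff hY.aemeasurable measurableSet_Icc).2 hY01
  have hle : μ {ω | X ω ≤ c * Y ω} = ∫⁻ y, ENNReal.ofReal c * ENNReal.ofReal y ∂μ.map Y := by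
    refine (hXY.measure_preimage_eq_lintegral hY hX (B := {q | q.2 ≤ c * q.1})
      (measurableSet_le measurable_snd (measurable_fst.const_mul c))).trans ?_
    rw [hunif]
    refine lintegral_congr_ae (hν.mono fun y hy => ?_)
    exact (volume_restrict_Icc_Iic ⟨mul_nonneg hc.1 hy.1, mul_le_one₀ hc.2 hy.1 hy.2⟩).trans
      (by rw [sub_zero, ENNReal.ofReal_mul hc.1])
  have hlt : μ {ω | X ω < Y ω} = ∫⁻ y, ENNReal.ofReal y ∂μ.map Y := by
    refine (hXY.measure_preimage_eq_lintegral hY hX (B := {q | q.2 < q.1})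
      (measurableSet_lt measurable_snd measurable_fst)).trans ?_
    rw [hunif]
    refine lintegral_congr_ae (hν.mono fun y hy => ?_)
    exact (volume_restrict_Icc_Iio hy).trans (by rw [sub_zero])
  rw [hle, hlt, lintegral_const_mul _ ENNReal.measurable_ofReal]

theorem winner_p_value_control_general
    {Ω : Type*} [MeasurableSpace Ω] (μpr : Measure Ω) [IsProbabilityMeasure μpr]
    (n : ℕ)
    (p : Fin n → Ω → ℝ) (hmeas : ∀ i, Measurable (p i))
    (hindep : iIndepFun p μpr)
    (j : Fin n)
    (hunif : μpr.map (p j) = volume.restrict (Set.Icc (0:ℝ) 1))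
    (f : Fin n → ℝ → ℝ)
    (hdens : ∀ i, i ≠ j → μpr.map (p i)
      = (volume.restrict (Set.Icc (0:ℝ) 1)).withDensity (fun x => ENNReal.ofReal (f i x)))
    (S : Set Ω) (hSdef : S = {ω | ∀ i, i ≠ j → p j ω < p i ω})
    (α : ℝ) (hα : α ∈ Set.Icc (0:ℝ) 1) :
    μpr[|S] {ω | p j ω ≤ α * ⨅ i : {i : Fin n // i ≠ j}, p i.1 ω} ≤ ENNReal.ofReal α := by
  set M : Ω → ℝ := fun ω => ⨅ i : {i : Fin n // i ≠ j}, p i.1 ω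
  have hM : Measurable M := .iInf fun i => hmeas i.1
  have hunit : ∀ i, ∀ᵐ ω ∂μpr, p i ω ∈ Icc (0 : ℝ) 1 := by
    intro i
    refine (ae_map_iff (hmeas i).aemeasurable measurableSet_Icc).1 ?_
    rcases eq_or_ne i j with rfl | hij
    · rw [hunif]
      exact ae_restrict_mem measurableSet_Icc
    · rw [hdens i hij]
      exact (withDensity_absolutelyContinuous _ _).ae_le (ae_restrict_mem measurableSet_Icc)
  have hMunit : ∀ᵐ ω ∂μpr, M ω ∈ Icc (0 : ℝ) 1 :=
    (ae_all_iff.2 hunit).mono fun ω hω => Real.iInf_mem_Icc_zero_one fun i => hω i.1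
  have hsub : {ω | p j ω < M ω} ⊆ S := by
    rw [hSdef]
    intro ω hω i hi
    exact hω.out.trans_le (ciInf_le (Finite.bddBelow_range _) (⟨i, hi⟩ : {i : Fin n // i ≠ j}))
  rw [cond_apply' (measurableSet_le (hmeas j) (hM.const_mul α)), mul_comm, ← div_eq_mul_inv]
  refine ENNReal.div_le_of_le_mul ?_
  calc μpr (S ∩ {ω | p j ω ≤ α * M ω})
      ≤ μpr {ω | p j ω ≤ α * M ω} := measure_mono inter_subset_right
    _ = ENNReal.ofReal α * μpr {ω | p j ω < M ω} :=
      (hindep.indepFun_iInf_ne hmeas j).symm.measure_le_mul_eq_mul_measure_lt_of_uniform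
        (hmeas j) hM hunif hMunit hα
    _ ≤ ENNReal.ofReal α * μpr S := by gcongr

/-- Inference on the winning p-value: conditional on `p_j` being the
strict minimum, `P(p_j ≤ α · min_{i ≠ j} p_i | S) ≤ α`. -/
theorem winner_p_value_control
    {Ω : Type*} [MeasurableSpace Ω] (μpr : Measure Ω) [IsProbabilityMeasure μpr]
    (n : ℕ) (hn : 2 ≤ n)
    (p : Fin n → Ω → ℝ) (hmeas : ∀ i, Measurable (p i))
    (hindep : iIndepFun p μpr)
    (j : Fin n)
    (hunif : μpr.map (p j) = volume.restrict (Set.Icc (0:ℝ) 1))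
    (f : Fin n → ℝ → ℝ)
    (hmono : ∀ i, i ≠ j → MonotoneOn (f i) (Set.Icc (0:ℝ) 1))
    (hf_nonneg : ∀ i, i ≠ j → ∀ x ∈ Set.Icc (0:ℝ) 1, 0 ≤ f i x)
    (hdens : ∀ i, i ≠ j → μpr.map (p i)
      = (volume.restrict (Set.Icc (0:ℝ) 1)).withDensity (fun x => ENNReal.ofReal (f i x)))
    (S : Set Ω) (hSdef : S = {ω | ∀ i, i ≠ j → p j ω < p i ω})
    (hSpos : 0 < μpr S)
    (α : ℝ) (hα : α ∈ Set.Icc (0:ℝ) 1) :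
    μpr[|S] {ω | p j ω ≤ α * ⨅ i : {i : Fin n // i ≠ j}, p i.1 ω} ≤ ENNReal.ofReal α :=
  winner_p_value_control_general μpr n p hmeas hindep j hunif f hdens S hSdef α hα
end

section
/- Fix α, β with 0 ≤ β ≤ α < 1 and n ≥ 1, and set β_n = 1 − (1−β)^{1/n}. Let p₁, …, pₙ be independent random variables on [0,1] each with non-decreasing density (uniform for indices in the null set). Then the procedure that rejects the null H_{0,W} corresponding to the smallest p-value W when p_(1) ≤ ((α−β)/(1−β))·p_(2) + (1 − (α−β)/(1−β))·β_n has probability of false rejection at most α, whenever H_{0,W} is among the true nulls. -/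
open MeasureTheory ProbabilityTheory Set

/-!
Write `c = (1 - β) ^ (1 / n)`, so that `β_n = 1 - c`, put `γ = (α - β) / (1 - β)`, and let `G` be
the event that every null p-value exceeds `β_n`. By independence `P(G) = c ^ |T| ≥ c ^ n = 1 - β`.
On `G`, rejecting a null `j` forces `β_n < p_j ≤ β_n + γ (M_j - β_n)`, where `M_j` is the minimum of
the other p-values. As `p_j` is uniform and independent of `M_j ≤ 1`, this has probability exactly
`γ · P(β_n < p_j < M_j)`, and the events `β_n < p_j < M_j` are disjoint subevents of `G`. Hence the
error is at most `P(Gᶜ) + γ P(G) = 1 - (1 - γ) P(G) ≤ 1 - (1 - γ) (1 - β) = α`.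
-/

/-- The junk value of `⨅` over the empty type makes this `0` when `j` is the only index. -/
noncomputable def minOthers {Ω ι : Type*} (p : ι → Ω → ℝ) (j : ι) (ω : Ω) : ℝ :=
  ⨅ i : {i // i ≠ j}, p i ω

lemma le_rpow_one_div_pow {x : ℝ} (hx0 : 0 ≤ x) (hx1 : x ≤ 1) {k n : ℕ} (hkn : k ≤ n) :
    x ≤ (x ^ ((1 : ℝ) / n)) ^ k := by
  calc x ≤ (x ^ ((1 : ℝ) / n)) ^ n := by
        rcases n.eq_zero_or_pos with rfl | hn
        · simpa using hx1
        · rw [← Real.rpow_natCast, ← Real.rpow_mul hx0, one_div_mul_cancel (by positivity),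
            Real.rpow_one]
    _ ≤ (x ^ ((1 : ℝ) / n)) ^ k :=
        pow_le_pow_of_le_one (by positivity) (Real.rpow_le_one hx0 hx1 (by positivity)) hkn

lemma volume_restrict_Icc_Ioc {a b : ℝ} (ha : 0 ≤ a) (hb : b ≤ 1) :
    volume.restrict (Icc (0 : ℝ) 1) (Ioc a b) = ENNReal.ofReal (b - a) := by
  rw [Measure.restrict_eq_self _ (Ioc_subset_Icc_self.trans (Icc_subset_Icc ha hb)),
    Real.volume_Ioc]

lemma volume_restrict_Icc_Ioo {a b : ℝ} (ha : 0 ≤ a) (hb : b ≤ 1) :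
    volume.restrict (Icc (0 : ℝ) 1) (Ioo a b) = ENNReal.ofReal (b - a) := by
  rw [Measure.restrict_eq_self _ (Ioo_subset_Icc_self.trans (Icc_subset_Icc ha hb)),
    Real.volume_Ioo]

lemma volume_restrict_Icc_Ioi {a : ℝ} (ha : 0 ≤ a) :
    volume.restrict (Icc (0 : ℝ) 1) (Ioi a) = ENNReal.ofReal (1 - a) := by
  have hIoc : Ioi a ∩ Icc 0 1 = Ioc a 1 :=
    Set.ext fun x => ⟨fun h => ⟨h.1, h.2.2⟩, fun h => ⟨h.1, ha.trans h.1.le, h.2⟩⟩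
  rw [Measure.restrict_apply measurableSet_Ioi, hIoc, Real.volume_Ioc]

section

variable {Ω ι : Type*} [Finite ι] {p : ι → Ω → ℝ}

lemma minOthers_le_apply (p : ι → Ω → ℝ) {i j : ι} (hij : i ≠ j) (ω : Ω) :
    minOthers p j ω ≤ p i ω :=
  ciInf_le (f := fun i : {i // i ≠ j} => p i ω) (finite_range _).bddBelow ⟨i, hij⟩

lemma minOthers_le {j : ι} {ω : Ω} {b : ℝ} (hb : 0 ≤ b) (h : ∀ i, p i ω ≤ b) :
    minOthers p j ω ≤ b := by
  cases isEmpty_or_nonempty {i // i ≠ j} with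
  | inl _ => simpa [minOthers] using hb
  | inr hne => exact (minOthers_le_apply p hne.some.2 ω).trans (h _)

end

section

variable {Ω ι : Type*} [MeasurableSpace Ω] {μ : Measure Ω}

lemma ae_le_one_of_map_eq_withDensity {X : Ω → ℝ} (hX : Measurable X) {g : ℝ → ENNReal}
    (h : μ.map X = (volume.restrict (Icc (0 : ℝ) 1)).withDensity g) : ∀ᵐ ω ∂μ, X ω ≤ 1 := by
  refine ae_of_ae_map (p := fun x => x ≤ 1) hX.aemeasurable ?_
  rw [h]
  exact (withDensity_absolutelyContinuous _ _).ae_le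
    ((ae_restrict_mem measurableSet_Icc).mono fun x hx => hx.2)

/-- Fubini over the joint law `law Z ⊗ law X`: for every value `z ≤ 1` of `Z`, both sections are
intervals of uniform measure `γ (z - a)⁺` and `(z - a)⁺`. -/
lemma ProbabilityTheory.IndepFun.measure_lt_le_shrink_eq_mul [IsFiniteMeasure μ] {X Z : Ω → ℝ}
    (hX : Measurable X) (hZ : Measurable Z) (hXZ : IndepFun X Z μ)
    (hXu : μ.map X = volume.restrict (Icc (0 : ℝ) 1)) (hZ1 : ∀ᵐ ω ∂μ, Z ω ≤ 1)
    {a γ : ℝ} (ha0 : 0 ≤ a) (ha1 : a ≤ 1) (hγ0 : 0 ≤ γ) (hγ1 : γ ≤ 1) :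
    μ {ω | a < X ω ∧ X ω ≤ a + γ * (Z ω - a)}
      = ENNReal.ofReal γ * μ {ω | a < X ω ∧ X ω < Z ω} := by
  set SA : Set (ℝ × ℝ) := {q | a < q.2 ∧ q.2 ≤ a + γ * (q.1 - a)}
  set SC : Set (ℝ × ℝ) := {q | a < q.2 ∧ q.2 < q.1}
  have hSA : MeasurableSet SA :=
    (measurableSet_lt measurable_const measurable_snd).inter (measurableSet_le measurable_snd
      (by fun_prop : Measurable fun q : ℝ × ℝ => a + γ * (q.1 - a)))
  have hSC : MeasurableSet SC :=
    (measurableSet_lt measurable_const measurable_snd).inter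
      (measurableSet_lt measurable_snd measurable_fst)
  have hlaw : μ.map (fun ω => (Z ω, X ω)) = (μ.map Z).prod (μ.map X) :=
    (indepFun_iff_map_prod_eq_prod_map_map hZ.aemeasurable hX.aemeasurable).1 hXZ.symm
  have hsection : ∀ᵐ z ∂(μ.map Z),
      volume.restrict (Icc (0 : ℝ) 1) (Ioc a (a + γ * (z - a)))
        = ENNReal.ofReal γ * volume.restrict (Icc (0 : ℝ) 1) (Ioo a z) := by
    filter_upwards [(ae_map_iff hZ.aemeasurable measurableSet_Iic).2 hZ1] with z hz
    have hz1 : z ≤ 1 := hz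
    rw [volume_restrict_Icc_Ioc ha0 (by nlinarith), volume_restrict_Icc_Ioo ha0 hz1,
      ← ENNReal.ofReal_mul hγ0, add_sub_cancel_left]
  change μ ((fun ω => (Z ω, X ω)) ⁻¹' SA) = ENNReal.ofReal γ * μ ((fun ω => (Z ω, X ω)) ⁻¹' SC)
  rw [← Measure.map_apply (hZ.prodMk hX) hSA, ← Measure.map_apply (hZ.prodMk hX) hSC, hlaw,
    Measure.prod_apply hSA, Measure.prod_apply hSC, hXu,
    ← lintegral_const_mul' _ _ ENNReal.ofReal_ne_top]
  exact lintegral_congr_ae hsection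

lemma ProbabilityTheory.iIndepFun.measure_forall_lt_eq_pow {p : ι → Ω → ℝ}
    (hp : ∀ i, Measurable (p i)) (hind : iIndepFun p μ) (s : Finset ι)
    (hu : ∀ i ∈ s, μ.map (p i) = volume.restrict (Icc (0 : ℝ) 1)) {a : ℝ} (ha : 0 ≤ a) :
    μ {ω | ∀ i ∈ s, a < p i ω} = ENNReal.ofReal (1 - a) ^ s.card := by
  have hG : {ω | ∀ i ∈ s, a < p i ω} = ⋂ i ∈ s, p i ⁻¹' Ioi a := by ext; simp
  rw [hG, hind.meas_biInter fun i _ => comap_measurable (p i) measurableSet_Ioi,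
    ← Finset.prod_const]
  refine Finset.prod_congr rfl fun i hi => ?_
  rw [← Measure.map_apply (hp i) measurableSet_Ioi, hu i hi, volume_restrict_Icc_Ioi ha]

section minOthers

variable [Finite ι] {p : ι → Ω → ℝ}

lemma measurable_minOthers (hp : ∀ i, Measurable (p i)) (j : ι) : Measurable (minOthers p j) :=
  Measurable.iInf fun i => hp i

lemma ProbabilityTheory.iIndepFun.indepFun_minOthers (hp : ∀ i, Measurable (p i))
    (hind : iIndepFun p μ) (j : ι) :
    IndepFun (p j) (minOthers p j) μ := by
  classical
  have := Fintype.ofFinite ι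
  exact (hind.indepFun_finset {j} {j}ᶜ disjoint_compl_right hp).comp
    (ψ := fun v : ({j}ᶜ : Finset ι) → ℝ => ⨅ i : {i // i ≠ j}, v ⟨i.1, by simpa using i.2⟩)
    (measurable_pi_apply ⟨j, Finset.mem_singleton_self j⟩)
    (Measurable.iInf fun i => measurable_pi_apply _)

lemma sum_measure_lt_lt_minOthers_le (hp : ∀ i, Measurable (p i)) (s : Finset ι) (a : ℝ) :
    ∑ j ∈ s, μ {ω | a < p j ω ∧ p j ω < minOthers p j ω} ≤ μ {ω | ∀ i ∈ s, a < p i ω} := by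
  rw [← measure_biUnion_finset]
  · refine measure_mono (iUnion₂_subset fun j _ ω hω i _ => ?_)
    rcases eq_or_ne i j with rfl | hij
    · exact hω.1
    · exact hω.1.trans (hω.2.trans_le (minOthers_le_apply p hij ω))
  · intro j _ k _ hjk
    exact disjoint_left.2 fun ω hj hk =>
      lt_asymm (hj.2.trans_le (minOthers_le_apply p hjk.symm ω))
        (hk.2.trans_le (minOthers_le_apply p hjk ω))
  · exact fun j _ => (measurableSet_lt measurable_const (hp j)).inter
      (measurableSet_lt (hp j) (measurable_minOthers hp j))

theorem measure_exists_le_hybridCutoff_le [IsProbabilityMeasure μ] (hp : ∀ i, Measurable (p i))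
    (hind : iIndepFun p μ) (hle : ∀ i, ∀ᵐ ω ∂μ, p i ω ≤ 1)
    (s : Finset ι) (hu : ∀ i ∈ s, μ.map (p i) = volume.restrict (Icc (0 : ℝ) 1))
    {a γ : ℝ} (ha0 : 0 ≤ a) (ha1 : a ≤ 1) (hγ0 : 0 ≤ γ) (hγ1 : γ ≤ 1) :
    μ {ω | ∃ j ∈ s, p j ω ≤ γ * minOthers p j ω + (1 - γ) * a}
      ≤ ENNReal.ofReal (1 - (1 - γ) * (1 - a) ^ s.card) := by
  set G := {ω | ∀ i ∈ s, a < p i ω}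
  set A := fun j => {ω | a < p j ω ∧ p j ω ≤ a + γ * (minOthers p j ω - a)}
  set C := fun j => {ω | a < p j ω ∧ p j ω < minOthers p j ω}
  have hG : MeasurableSet G := by
    simp only [G, ofPred_forall]
    exact .iInter fun i => .iInter fun _ => measurableSet_lt measurable_const (hp i)
  have hcover :
      {ω | ∃ j ∈ s, p j ω ≤ γ * minOthers p j ω + (1 - γ) * a} ⊆ Gᶜ ∪ ⋃ j ∈ s, A j := by
    rintro ω ⟨j, hj, hrej⟩
    by_cases hωG : ω ∈ G
    · exact Or.inr (mem_biUnion hj ⟨hωG j hj, by linarith⟩)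
    · exact Or.inl hωG
  have hAC : ∀ j ∈ s, μ (A j) = ENNReal.ofReal γ * μ (C j) := fun j hj =>
    (hind.indepFun_minOthers hp j).measure_lt_le_shrink_eq_mul (hp j)
      (measurable_minOthers hp j) (hu j hj)
      ((ae_all_iff.2 hle).mono fun ω h => minOthers_le zero_le_one h) ha0 ha1 hγ0 hγ1
  calc μ {ω | ∃ j ∈ s, p j ω ≤ γ * minOthers p j ω + (1 - γ) * a}
      ≤ μ Gᶜ + ∑ j ∈ s, μ (A j) :=
        (measure_mono hcover).trans ((measure_union_le _ _).trans
          (add_le_add_right (measure_biUnion_finset_le s A) _))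
    _ = μ Gᶜ + ENNReal.ofReal γ * ∑ j ∈ s, μ (C j) := by
        rw [Finset.sum_congr rfl hAC, Finset.mul_sum]
    _ ≤ μ Gᶜ + ENNReal.ofReal γ * μ G := by
        gcongr
        exact sum_measure_lt_lt_minOthers_le hp s a
    _ = ENNReal.ofReal (1 - (1 - γ) * (1 - a) ^ s.card) := by
        have hq : 0 ≤ (1 - a) ^ s.card := pow_nonneg (by linarith) _
        have hq1 : (1 - a) ^ s.card ≤ 1 := pow_le_one₀ (by linarith) (by linarith)
        rw [prob_compl_eq_one_sub hG, hind.measure_forall_lt_eq_pow hp s hu ha0,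
          ← ENNReal.ofReal_pow (by linarith), ← ENNReal.ofReal_one, ← ENNReal.ofReal_sub _ hq,
          ← ENNReal.ofReal_mul hγ0, ← ENNReal.ofReal_add (by linarith) (mul_nonneg hγ0 hq)]
        ring_nf

end minOthers

end

theorem hybrid_inference_type_one_error_general
    {Ω : Type*} [MeasurableSpace Ω] (μpr : Measure Ω) [IsProbabilityMeasure μpr]
    (α β : ℝ) (hβ0 : 0 ≤ β) (hβα : β ≤ α) (hα1 : α < 1)
    (n : ℕ)
    (p : Fin n → Ω → ℝ) (hmeas : ∀ i, Measurable (p i))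
    (hindep : iIndepFun p μpr)
    (f : Fin n → ℝ → ℝ)
    (hdens : ∀ i, μpr.map (p i)
      = (volume.restrict (Set.Icc (0:ℝ) 1)).withDensity (fun x => ENNReal.ofReal (f i x)))
    -- T is the set of true nulls, whose p-values are exactly uniform
    (T : Set (Fin n))
    (hnull : ∀ i ∈ T, μpr.map (p i) = volume.restrict (Set.Icc (0:ℝ) 1)) :
    μpr {ω | ∃ j ∈ T, (∀ i, i ≠ j → p j ω ≤ p i ω) ∧
        p j ω ≤ ((α - β) / (1 - β)) * (⨅ i : {i : Fin n // i ≠ j}, p i.1 ω)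
          + (1 - (α - β) / (1 - β)) * (1 - (1 - β) ^ ((1 : ℝ) / n))}
      ≤ ENNReal.ofReal α := by
  have h1β : 0 < 1 - β := by linarith
  set γ := (α - β) / (1 - β)
  set c := (1 - β) ^ ((1 : ℝ) / n)
  have hc1 : c ≤ 1 := Real.rpow_le_one h1β.le (by linarith) (by positivity)
  have hγ1 : γ ≤ 1 := (div_le_one h1β).2 (by linarith)
  have hγ : γ * (1 - β) = α - β := div_mul_cancel₀ _ h1β.ne'
  set s := T.toFinite.toFinset
  have hcs : 1 - β ≤ c ^ s.card :=
    le_rpow_one_div_pow h1β.le (by linarith)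
      ((Finset.card_le_univ s).trans_eq (Fintype.card_fin n))
  have hbound := measure_exists_le_hybridCutoff_le hmeas hindep
    (fun i => ae_le_one_of_map_eq_withDensity (hmeas i) (hdens i)) s
    (fun i hi => hnull i (T.toFinite.mem_toFinset.1 hi)) (a := 1 - c) (γ := γ)
    (by linarith) (by linarith [show 0 ≤ c by positivity]) (div_nonneg (by linarith) h1β.le) hγ1
  refine (measure_mono ?_).trans (hbound.trans (ENNReal.ofReal_le_ofReal ?_))
  · rintro ω ⟨j, hj, -, hrej⟩
    exact ⟨j, T.toFinite.mem_toFinset.2 hj, hrej⟩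
  · rw [sub_sub_cancel]
    nlinarith

/-- Type I error control of hybrid inference: the probability that the
winner corresponds to a true null and the hybrid cutoff rejects it is at most `α`. -/
theorem hybrid_inference_type_one_error
    {Ω : Type*} [MeasurableSpace Ω] (μpr : Measure Ω) [IsProbabilityMeasure μpr]
    (α β : ℝ) (hβ0 : 0 ≤ β) (hβα : β ≤ α) (hα1 : α < 1)
    (n : ℕ) (hn : 2 ≤ n)
    (p : Fin n → Ω → ℝ) (hmeas : ∀ i, Measurable (p i))
    (hindep : iIndepFun p μpr)
    (f : Fin n → ℝ → ℝ)
    (hmono : ∀ i, MonotoneOn (f i) (Set.Icc (0:ℝ) 1))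
    (hf_nonneg : ∀ i, ∀ x ∈ Set.Icc (0:ℝ) 1, 0 ≤ f i x)
    (hdens : ∀ i, μpr.map (p i)
      = (volume.restrict (Set.Icc (0:ℝ) 1)).withDensity (fun x => ENNReal.ofReal (f i x)))
    -- T is the set of true nulls, whose p-values are exactly uniform
    (T : Set (Fin n))
    (hnull : ∀ i ∈ T, μpr.map (p i) = volume.restrict (Set.Icc (0:ℝ) 1)) :
    μpr {ω | ∃ j ∈ T, (∀ i, i ≠ j → p j ω ≤ p i ω) ∧
        p j ω ≤ ((α - β) / (1 - β)) * (⨅ i : {i : Fin n // i ≠ j}, p i.1 ω)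
          + (1 - (α - β) / (1 - β)) * (1 - (1 - β) ^ ((1 : ℝ) / n))}
      ≤ ENNReal.ofReal α :=
  hybrid_inference_type_one_error_general μpr α β hβ0 hβα hα1 n p hmeas hindep f hdens T hnull
end

section
/- Let X₁ ~ N(μ₁, 1/2) and X₂ ~ N(μ₂, 1/2) be independent with μ₁ ≥ μ₂, and let Φ be the standard normal CDF. Define W = 1 if X₁ > X₂ and W = 2 otherwise, R the other index, and p_{WR} = 1 − Φ(X_W − X_R). Then P(reject H: μ_W < μ_R falsely) = P(p_{21} < α, X₂ > X₁)·1{μ₂ < μ₁} ≤ α; i.e., the uncorrected level-α one-sided test comparing winner to loser controls Type I error for the strict-inequality null μ_W < μ_R. -/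
/-!
The difference `X₂ - X₁` is `N(μ₂ - μ₁, 1)`, and a false rejection forces `X₂ - X₁` into the
upper set `S = {x | 1 - Φ x < α}`. Lowering the mean of a Gaussian can only decrease the mass of
an upper set, so the probability is at most `N(0, 1)(S)`, and this is at most `α` because the
p-value `1 - F(Z)` of a random variable `Z` with continuous CDF `F` is super-uniform.
-/

open MeasureTheory ProbabilityTheory Set
open scoped ENNReal NNReal

/-- The standard normal CDF. -/
noncomputable def stdNormalCDF : ℝ → ℝ :=
  fun x => (ProbabilityTheory.cdf (ProbabilityTheory.gaussianReal 0 1)) x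

namespace ProbabilityTheory

lemma continuous_cdf (ν : Measure ℝ) [IsProbabilityMeasure ν] [NullSingletonClass ν] :
    Continuous (cdf ν) := by
  refine continuous_iff_continuousAt.2 fun x => ?_
  have hleft : Function.leftLim (cdf ν) x = cdf ν x := by
    have h := (cdf ν).measure_singleton x
    rw [measure_cdf, measure_singleton, eq_comm, ENNReal.ofReal_eq_zero] at h
    exact le_antisymm (monotone_cdf ν |>.leftLim_le le_rfl) (sub_nonpos.1 h)
  rw [(monotone_cdf ν).continuousAt_iff_leftLim_eq_rightLim, hleft, (cdf ν).rightLim_eq]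

lemma measure_one_sub_cdf_lt_le (ν : Measure ℝ) [IsProbabilityMeasure ν] [NullSingletonClass ν]
    (α : ℝ) : ν {x | 1 - cdf ν x < α} ≤ ENNReal.ofReal α := by
  rcases le_or_gt α 0 with hα0 | hα0
  · have hempty : {x | 1 - cdf ν x < α} = ∅ :=
      eq_empty_of_forall_notMem fun x (hx : 1 - cdf ν x < α) => by
        linarith [cdf_le_one ν x]
    simp [hempty]
  rcases le_or_gt 1 α with hα1 | hα1
  · exact prob_le_one.trans (ENNReal.one_le_ofReal.2 hα1)
  obtain ⟨t, ht⟩ : 1 - α ∈ range (cdf ν) := by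
    refine mem_range_of_exists_le_of_exists_ge (continuous_cdf ν) ?_ ?_
    · exact ((tendsto_cdf_atBot ν).eventually_le_const (by linarith)).exists
    · exact ((tendsto_cdf_atTop ν).eventually_const_le (by linarith)).exists
  calc ν {x | 1 - cdf ν x < α}
      ≤ ν (Ioi t) := measure_mono fun x (hx : 1 - cdf ν x < α) =>
        (monotone_cdf ν).reflect_lt (by linarith)
    _ = ENNReal.ofReal α := by
        rw [← compl_Iic, prob_compl_eq_one_sub measurableSet_Iic, ← ofReal_cdf, ht,
          ← ENNReal.ofReal_one, ← ENNReal.ofReal_sub _ (by linarith), sub_sub_cancel]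

lemma map_add_const_apply_le_of_isUpperSet {G : Type*} [AddCommGroup G] [PartialOrder G]
    [IsOrderedAddMonoid G] [MeasurableSpace G] [MeasurableAdd G] (ν : Measure G)
    {c : G} (hc : c ≤ 0) {S : Set G} (hS : IsUpperSet S) : ν.map (· + c) S ≤ ν S := by
  rw [(measurableEmbedding_addRight c).map_apply]
  exact measure_mono fun x hx => hS (add_le_of_nonpos_right hc) hx

lemma gaussianReal_apply_mono_of_isUpperSet {m m' : ℝ} (hm : m ≤ m') (v : ℝ≥0)
    {S : Set ℝ} (hS : IsUpperSet S) : gaussianReal m v S ≤ gaussianReal m' v S := by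
  have hshift : gaussianReal m v = (gaussianReal m' v).map (· + (m - m')) := by
    rw [gaussianReal_map_add_const, add_sub_cancel]
  rw [hshift]
  exact map_add_const_apply_le_of_isUpperSet _ (sub_nonpos.2 hm) hS

lemma gaussianReal_sub_gaussianReal_of_indepFun {Ω : Type*} {mΩ : MeasurableSpace Ω}
    {P : Measure Ω} {m₁ m₂ : ℝ} {v₁ v₂ : ℝ≥0} {X Y : Ω → ℝ} (hXY : IndepFun X Y P)
    (hX : P.map X = gaussianReal m₁ v₁) (hY : P.map Y = gaussianReal m₂ v₂) :
    P.map (X - Y) = gaussianReal (m₁ - m₂) (v₁ + v₂) := by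
  have hYlaw : HasLaw Y (gaussianReal m₂ v₂) P :=
    ⟨.of_map_ne_zero (hY ▸ IsProbabilityMeasure.ne_zero _), hY⟩
  rw [sub_eq_add_neg, sub_eq_add_neg]
  exact gaussianReal_add_gaussianReal_of_indepFun (hXY.comp measurable_id measurable_neg) hX
    (gaussianReal_neg hYlaw).map_eq

end ProbabilityTheory

theorem rank_verification_strict_null_general
    {Ω : Type*} [MeasurableSpace Ω] (μpr : Measure Ω)
    (μ₁ μ₂ : ℝ)
    (X₁ X₂ : Ω → ℝ)
    (hind : IndepFun X₁ X₂ μpr)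
    (hd1 : μpr.map X₁ = gaussianReal μ₁ (1/2))
    (hd2 : μpr.map X₂ = gaussianReal μ₂ (1/2))
    (α : ℝ) :
    (if μ₂ < μ₁ then
        μpr {ω | X₁ ω < X₂ ω ∧ 1 - stdNormalCDF (X₂ ω - X₁ ω) < α}
      else 0)
      ≤ ENNReal.ofReal α := by
  split_ifs with hlt
  · set S : Set ℝ := {x | 1 - stdNormalCDF x < α}
    have hS : IsUpperSet S := fun x y hxy hx =>
      lt_of_le_of_lt (sub_le_sub_left (monotone_cdf _ hxy) 1) hx
    have hD : μpr.map (X₂ - X₁) = gaussianReal (μ₂ - μ₁) 1 := by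
      rw [gaussianReal_sub_gaussianReal_of_indepFun hind.symm hd2 hd1]
      norm_num
    have hD_meas : AEMeasurable (X₂ - X₁) μpr :=
      .of_map_ne_zero (hD ▸ IsProbabilityMeasure.ne_zero _)
    have : NullSingletonClass (gaussianReal 0 1) := nullSingletonClass_gaussianReal one_ne_zero
    calc μpr {ω | X₁ ω < X₂ ω ∧ 1 - stdNormalCDF (X₂ ω - X₁ ω) < α}
        ≤ μpr ((X₂ - X₁) ⁻¹' S) := measure_mono fun ω hω => hω.2
      _ ≤ gaussianReal (μ₂ - μ₁) 1 S := hD ▸ Measure.le_map_apply hD_meas S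
      _ ≤ gaussianReal 0 1 S := gaussianReal_apply_mono_of_isUpperSet (by linarith) 1 hS
      _ ≤ ENNReal.ofReal α := measure_one_sub_cdf_lt_le _ α
  · exact zero_le

/-- Rank verification with the strict-inequality null `μ_W < μ_R`:
the uncorrected level-α one-sided test comparing winner to loser controls Type I
error. A false rejection only occurs when `μ₂ < μ₁` and `X₂` wins. -/
theorem rank_verification_strict_null
    {Ω : Type*} [MeasurableSpace Ω] (μpr : Measure Ω) [IsProbabilityMeasure μpr]
    (μ₁ μ₂ : ℝ) (hμ : μ₂ ≤ μ₁)
    (X₁ X₂ : Ω → ℝ) (h1 : Measurable X₁) (h2 : Measurable X₂)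
    (hind : IndepFun X₁ X₂ μpr)
    (hd1 : μpr.map X₁ = gaussianReal μ₁ (1/2))
    (hd2 : μpr.map X₂ = gaussianReal μ₂ (1/2))
    (α : ℝ) (hα : α ∈ Set.Icc (0:ℝ) 1) :
    (if μ₂ < μ₁ then
        μpr {ω | X₁ ω < X₂ ω ∧ 1 - stdNormalCDF (X₂ ω - X₁ ω) < α}
      else 0)
      ≤ ENNReal.ofReal α :=
  rank_verification_strict_null_general μpr μ₁ μ₂ X₁ X₂ hind hd1 hd2 α
end

section
/- For fixed 0 < x₁ ≤ x₂, the function λ ↦ (1 − e^{−λ x₁})/(1 − e^{−λ x₂}) is monotone non-decreasing on (0,∞). -/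
/-! The λ-derivative of the ratio has the sign of
`x₁ e^{-λx₁} (1 - e^{-λx₂}) - x₂ e^{-λx₂} (1 - e^{-λx₁})`, which is non-negative because
`x ↦ x / (eˣ - 1)` is antitone on `(0, ∞)`: its reciprocal is the slope of the convex function
`exp` on the chord from `0` to `x`. -/

open Real Set

lemma mul_exp_sub_one_le_mul_exp_sub_one {a b : ℝ} (ha : 0 < a) (hab : a ≤ b) :
    b * (exp a - 1) ≤ a * (exp b - 1) := by
  have hb : 0 < b := ha.trans_le hab
  have hslope := convexOn_exp.secant_mono (mem_univ 0) (mem_univ a) (mem_univ b)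
    ha.ne' hb.ne' hab
  rw [exp_zero, sub_zero, sub_zero, div_le_div_iff₀ ha hb] at hslope
  linarith

lemma one_sub_exp_neg_mul_mul_exp_neg_le {a b : ℝ} (ha : 0 < a) (hab : a ≤ b) :
    (1 - exp (-a)) * (b * exp (-b)) ≤ a * exp (-a) * (1 - exp (-b)) := by
  have hfactor (x : ℝ) : 1 - exp (-x) = exp (-x) * (exp x - 1) := by
    rw [mul_sub, ← exp_add, neg_add_cancel, exp_zero, mul_one]
  calc (1 - exp (-a)) * (b * exp (-b))
      = exp (-a) * exp (-b) * (b * (exp a - 1)) := by rw [hfactor]; ring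
    _ ≤ exp (-a) * exp (-b) * (a * (exp b - 1)) :=
        mul_le_mul_of_nonneg_left (mul_exp_sub_one_le_mul_exp_sub_one ha hab) (by positivity)
    _ = a * exp (-a) * (1 - exp (-b)) := by rw [hfactor b]; ring

lemma hasDerivAt_one_sub_exp_neg_mul (x l : ℝ) :
    HasDerivAt (fun l : ℝ => 1 - exp (-l * x)) (x * exp (-l * x)) l := by
  have hlin : HasDerivAt (fun l : ℝ => -l * x) (-x) l := by
    simpa using (hasDerivAt_neg l).mul_const x
  simpa [mul_comm] using hlin.exp.const_sub 1

/-- For `0 < x₁ ≤ x₂`, the ratio of exponential CDFs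
`λ ↦ (1 − e^{−λx₁})/(1 − e^{−λx₂})` is non-decreasing on `(0, ∞)`. -/
theorem exponential_cdf_ratio_monotone
    (x₁ x₂ : ℝ) (hx₁ : 0 < x₁) (h12 : x₁ ≤ x₂) :
    MonotoneOn
      (fun l : ℝ => (1 - Real.exp (-l * x₁)) / (1 - Real.exp (-l * x₂)))
      (Set.Ioi (0:ℝ)) := by
  have hden (l : ℝ) (hl : l ∈ Ioi 0) : 1 - exp (-l * x₂) ≠ 0 := by
    have hexp : -l * x₂ < 0 := by
      rw [neg_mul, neg_lt_zero]; exact mul_pos hl (hx₁.trans_le h12)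
    exact (sub_pos.2 (exp_lt_one_iff.2 hexp)).ne'
  have hderiv (l : ℝ) (hl : l ∈ Ioi 0) :=
    (hasDerivAt_one_sub_exp_neg_mul x₁ l).div (hasDerivAt_one_sub_exp_neg_mul x₂ l) (hden l hl)
  refine monotoneOn_of_hasDerivWithinAt_nonneg (convex_Ioi 0)
    (fun l hl => (hderiv l hl).continuousAt.continuousWithinAt)
    (fun l hl => (hderiv l (interior_subset hl)).hasDerivWithinAt) fun l hl => ?_
  rw [interior_Ioi, mem_Ioi] at hl
  have hnum := one_sub_exp_neg_mul_mul_exp_neg_le (mul_pos hl hx₁)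
    (mul_le_mul_of_nonneg_left h12 hl.le)
  simp only [neg_mul] at hnum ⊢
  refine div_nonneg (sub_nonneg.2 (le_of_mul_le_mul_left ?_ hl)) (sq_nonneg _)
  linarith
end

section
/- Let Z and Y be independent standard normal random variables and W = Z + Y. For any fixed constant a ∈ ℝ, the function t ↦ P(Z > a | W > t) is monotone non-decreasing in t. -/
open MeasureTheory ProbabilityTheory Set

/-!
Put `W = Z + Y` and `D = Z - Y`. The pair `(W, D)` is Gaussian and uncorrelated, hence
independent, and `{Z > a} = {W > 2a - D}`. Integrating out `D` gives
`P(Z > a | W > t) = ∫ P(W > 2a - e | W > t) dP_D(e)`, and each integrand is non-decreasing in `t`: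
`P(W > c | W > t)` equals `P(W > c) / P(W > t)` for `t ≤ c` and `1` for `t ≥ c`.
-/

namespace ProbabilityTheory

theorem monotone_cond_Ioi_Ioi {α : Type*} [LinearOrder α] [TopologicalSpace α]
    [ClosedIicTopology α] [MeasurableSpace α] [OpensMeasurableSpace α]
    (ν : Measure α) [IsFiniteMeasure ν] (hν : ∀ t, ν (Ioi t) ≠ 0) (c : α) :
    Monotone fun t => ν[Ioi c | Ioi t] := by
  intro s t hst
  rcases le_total t c with htc | hct
  · simp only [cond_apply measurableSet_Ioi, Ioi_inter_Ioi, sup_of_le_right (hst.trans htc),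
      sup_of_le_right htc]
    gcongr
  · have : IsProbabilityMeasure ν[|Ioi s] := cond_isProbabilityMeasure (hν s)
    calc ν[Ioi c | Ioi s] ≤ 1 := prob_le_one
      _ = ν[Ioi c | Ioi t] := by
        rw [cond_apply measurableSet_Ioi, Ioi_inter_Ioi, sup_of_le_left hct,
          ENNReal.inv_mul_cancel (hν t) (measure_ne_top ν _)]

section Independent

variable {Ω : Type*} [MeasurableSpace Ω] {μ : Measure Ω}

theorem IndepFun.cond_preimage_prodMk_eq_lintegral {E F : Type*} [MeasurableSpace E]
    [MeasurableSpace F] [IsFiniteMeasure μ] {X : Ω → E} {D : Ω → F} (hX : Measurable X)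
    (hD : Measurable D) (hXD : IndepFun X D μ) {s : Set E} (hs : MeasurableSet s)
    {S : Set (E × F)} (hS : MeasurableSet S) :
    μ[(fun ω => (X ω, D ω)) ⁻¹' S | X ⁻¹' s]
      = ∫⁻ e, (μ.map X)[(fun x => (x, e)) ⁻¹' S | s] ∂(μ.map D) := by
  have hsS : MeasurableSet (s ×ˢ univ ∩ S) := (hs.prod MeasurableSet.univ).inter hS
  have hlaw := (indepFun_iff_map_prod_eq_prod_map_map hX.aemeasurable hD.aemeasurable).mp hXD
  have hsection : ∀ e : F, s ∩ (fun x => (x, e)) ⁻¹' S = (fun x => (x, e)) ⁻¹' (s ×ˢ univ ∩ S) :=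
    fun e => by ext; simp
  simp only [cond_apply (hX hs), cond_apply hs, hsection]
  rw [lintegral_const_mul _ (measurable_measure_prodMk_right hsS),
    ← Measure.prod_apply_symm hsS, ← hlaw, Measure.map_apply (hX.prodMk hD) hsS,
    Measure.map_apply hX hs]
  congr 2
  ext ω
  simp

theorem IndepFun.cond_lt_add_eq_lintegral [IsFiniteMeasure μ] {W D : Ω → ℝ}
    (hW : Measurable W) (hD : Measurable D) (hWD : IndepFun W D μ) (c : ℝ) {s : Set ℝ}
    (hs : MeasurableSet s) :
    μ[{ω | c < W ω + D ω} | W ⁻¹' s] = ∫⁻ e, (μ.map W)[Ioi (c - e) | s] ∂(μ.map D) := by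
  have hsection : ∀ e : ℝ, (fun w => (w, e)) ⁻¹' {p : ℝ × ℝ | c < p.1 + p.2} = Ioi (c - e) :=
    fun e => by
      ext w
      change c < w + e ↔ c - e < w
      exact sub_lt_iff_lt_add.symm
  simp only [← hsection]
  exact hWD.cond_preimage_prodMk_eq_lintegral hW hD hs
    (measurableSet_lt measurable_const (measurable_fst.add measurable_snd))

theorem HasGaussianLaw.indepFun_add_sub {X Y : Ω → ℝ} (hX : HasGaussianLaw X μ)
    (hY : HasGaussianLaw Y μ) (hXY : IndepFun X Y μ) (hvar : Var[X; μ] = Var[Y; μ]) :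
    IndepFun (X + Y) (X - Y) μ := by
  have := hX.isProbabilityMeasure
  let L : ℝ × ℝ →L[ℝ] ℝ × ℝ :=
    (ContinuousLinearMap.fst ℝ ℝ ℝ + ContinuousLinearMap.snd ℝ ℝ ℝ).prod
      (ContinuousLinearMap.fst ℝ ℝ ℝ - ContinuousLinearMap.snd ℝ ℝ ℝ)
  have hjoint : HasGaussianLaw (fun ω => ((X + Y) ω, (X - Y) ω)) μ :=
    (hXY.hasGaussianLaw hX hY).map_fun L
  refine hjoint.indepFun_of_covariance_eq_zero ?_
  rw [covariance_add_left hX.memLp_two hY.memLp_two (hX.memLp_two.sub hY.memLp_two),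
    covariance_sub_right hX.memLp_two hX.memLp_two hY.memLp_two,
    covariance_sub_right hY.memLp_two hX.memLp_two hY.memLp_two,
    covariance_self hX.aemeasurable, covariance_self hY.aemeasurable, covariance_comm Y, hvar]
  ring

end Independent

end ProbabilityTheory

/-- For independent standard normals `Z, Y` and `W = Z + Y`, the map
`t ↦ P(Z > a | W > t)` is non-decreasing. -/
theorem data_carving_p_value_monotone
    {Ω : Type*} [MeasurableSpace Ω] (μpr : Measure Ω) [IsProbabilityMeasure μpr]
    (Z Y : Ω → ℝ) (hZ : Measurable Z) (hY : Measurable Y)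
    (hind : IndepFun Z Y μpr)
    (hdZ : μpr.map Z = gaussianReal 0 1)
    (hdY : μpr.map Y = gaussianReal 0 1)
    (a : ℝ) :
    Monotone fun t : ℝ => μpr[|{ω | t < Z ω + Y ω}] {ω | a < Z ω} := by
  have hvar : Var[Z; μpr] = Var[Y; μpr] := by
    rw [← variance_id_map hZ.aemeasurable, hdZ, ← variance_id_map hY.aemeasurable, hdY]
  have hindep : IndepFun (Z + Y) (Z - Y) μpr :=
    HasGaussianLaw.indepFun_add_sub ⟨hdZ ▸ inferInstance⟩ ⟨hdY ▸ inferInstance⟩ hind hvar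
  have hpos : ∀ t, μpr.map (Z + Y) (Ioi t) ≠ 0 := fun t h => by
    rw [gaussianReal_add_gaussianReal_of_indepFun hind hdZ hdY] at h
    simpa using gaussianReal_absolutelyContinuous' _ (by norm_num) h
  have hevent : {ω | a < Z ω} = {ω | 2 * a < (Z + Y) ω + (Z - Y) ω} := by
    ext ω
    change a < Z ω ↔ 2 * a < (Z ω + Y ω) + (Z ω - Y ω)
    constructor <;> intro h <;> linarith
  have hcond (t : ℝ) : μpr[{ω | a < Z ω} | {ω | t < Z ω + Y ω}]
      = ∫⁻ e, (μpr.map (Z + Y))[Ioi (2 * a - e) | Ioi t] ∂(μpr.map (Z - Y)) := by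
    rw [hevent]
    exact hindep.cond_lt_add_eq_lintegral (hZ.add hY) (hZ.sub hY) (2 * a) measurableSet_Ioi
  intro s t hst
  simp only [hcond]
  exact lintegral_mono fun e => monotone_cond_Ioi_Ioi _ hpos _ hst
end

section
/- Let p₁, …, p_k be independent random variables each with non-decreasing density on [0,1], and fix thresholds τ₁, …, τ_k ∈ (0,1]. Conditional on the event {p_j ≤ τ_j for all j ≤ k} (assumed to have positive probability), the random variables p_j/τ_j are jointly super-uniform: for all t ∈ [0,1]^k, P(p₁/τ₁ ≤ t₁, …, p_k/τ_k ≤ t_k | p_j ≤ τ_j ∀j) ≤ ∏_{j=1}^k t_j. Consequently, P(−2 ∑_{j=1}^k log(p_j/τ_j) ≥ Q | selection) ≤ P(χ²_{2k} ≥ Q) for every Q, where χ²_{2k} denotes a chi-squared random variable with 2k degrees of freedom. -/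
/-!
Conditioning independent variables on a product event `⋂ j, {p_j ≤ τ_j}` keeps them
independent, each with its truncated marginal law. A nondecreasing density gives
`P(p ≤ tτ) ≤ t · P(p ≤ τ)`, so every rescaled truncated law of `p_j / τ_j` is super-uniform,
and joint super-uniformity is the product of these bounds.

For Fisher's statistic, induct on the number of coordinates: after integrating out the other
coordinates, the tail probability is an antitone function of the first one, and an antitone
function integrates to more against the uniform law than against a super-uniform one. Against
the uniform law, the one-step integral turns the Erlang tail `e^{-Q/2} ∑_{i<n} (Q/2)^i / i!` of
`χ²_{2n}` into that of `χ²_{2(n+1)}`.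
-/

open MeasureTheory ProbabilityTheory Set Real
open scoped ENNReal Nat

def SuperUniform (ν : Measure ℝ) : Prop :=
  ∀ t : ℝ, ν (Iic t) ≤ ENNReal.ofReal t

namespace SuperUniform

variable {ν : Measure ℝ} [IsZeroOrProbabilityMeasure ν]

lemma measure_le_of_isLowerSet (hν : SuperUniform ν) {S : Set ℝ} (hS : IsLowerSet S) :
    ν S ≤ volume (S ∩ Icc 0 1) := by
  by_cases hbdd : BddAbove S
  swap
  · have hS_univ : S = univ := eq_univ_of_forall fun x => by
      obtain ⟨y, hy, hxy⟩ := not_bddAbove_iff.1 hbdd x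
      exact hS hxy.le hy
    simp [hS_univ, prob_le_one]
  rcases S.eq_empty_or_nonempty with rfl | hne
  · simp
  set c := sSup S
  have hSc : S ⊆ Iic c := fun x hx => le_csSup hbdd hx
  have hcS : Ico 0 (min c 1) ⊆ S ∩ Icc 0 1 := fun x hx => by
    obtain ⟨y, hy, hxy⟩ := exists_lt_of_lt_csSup hne (hx.2.trans_le (min_le_left _ _))
    exact ⟨hS hxy.le hy, hx.1, (hx.2.trans_le (min_le_right _ _)).le⟩
  calc ν S ≤ min (ENNReal.ofReal c) 1 := le_min ((measure_mono hSc).trans (hν c)) prob_le_one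
    _ = volume (Ico 0 (min c 1)) := by
      rw [Real.volume_Ico, sub_zero, ENNReal.ofReal_min, ENNReal.ofReal_one]
    _ ≤ volume (S ∩ Icc 0 1) := measure_mono hcS

lemma lintegral_le_of_antitone (hν : SuperUniform ν) {g : ℝ → ℝ} (hg : Antitone g)
    (hg0 : 0 ≤ g) : ∫⁻ x, ENNReal.ofReal (g x) ∂ν ≤ ∫⁻ x in Icc 0 1, ENNReal.ofReal (g x) := by
  rw [lintegral_eq_lintegral_meas_lt ν (ae_of_all _ hg0) hg.measurable.aemeasurable,
    lintegral_eq_lintegral_meas_lt _ (ae_of_all _ hg0) hg.measurable.aemeasurable]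
  refine lintegral_mono fun t => ?_
  rw [Measure.restrict_apply' measurableSet_Icc]
  exact hν.measure_le_of_isLowerSet fun a b hba ha => lt_of_lt_of_le ha (hg hba)

end SuperUniform

lemma measure_pi_univ_pi_Iic_le {ι : Type*} [Fintype ι] {ρ : ι → Measure ℝ}
    [∀ i, SigmaFinite (ρ i)] (hρ : ∀ i, SuperUniform (ρ i)) {t : ι → ℝ} (ht : ∀ i, 0 ≤ t i) :
    Measure.pi ρ (univ.pi fun i => Iic (t i)) ≤ ENNReal.ofReal (∏ i, t i) := by
  rw [Measure.pi_pi, ENNReal.ofReal_prod_of_nonneg fun i _ => ht i]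
  exact Finset.prod_le_prod' fun i _ => hρ i (t i)

lemma lintegral_Icc_mul_le_of_monotoneOn {g : ℝ → ℝ≥0∞} {a b : ℝ} (hg : MonotoneOn g (Icc 0 b))
    (ha : 0 ≤ a) (hab : a ≤ b) :
    (∫⁻ x in Icc 0 a, g x) * ENNReal.ofReal b ≤ ENNReal.ofReal a * ∫⁻ x in Icc 0 b, g x := by
  have ha_mem : a ∈ Icc 0 b := ⟨ha, hab⟩
  have hlow : ∫⁻ x in Icc 0 a, g x ≤ g a * ENNReal.ofReal a := by
    calc ∫⁻ x in Icc 0 a, g x ≤ ∫⁻ _ in Icc 0 a, g a :=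
          setLIntegral_mono' measurableSet_Icc fun x hx =>
            hg ⟨hx.1, hx.2.trans hab⟩ ha_mem hx.2
      _ = g a * ENNReal.ofReal a := by rw [setLIntegral_const, Real.volume_Icc, sub_zero]
  have hhigh : g a * ENNReal.ofReal (b - a) ≤ ∫⁻ x in Ioc a b, g x := by
    calc g a * ENNReal.ofReal (b - a) = ∫⁻ _ in Ioc a b, g a := by
          rw [setLIntegral_const, Real.volume_Ioc]
      _ ≤ ∫⁻ x in Ioc a b, g x :=
          setLIntegral_mono' measurableSet_Ioc fun x hx =>
            hg ha_mem ⟨ha.trans hx.1.le, hx.2⟩ hx.1.le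
  have hb : ENNReal.ofReal b = ENNReal.ofReal (b - a) + ENNReal.ofReal a := by
    rw [← ENNReal.ofReal_add (by linarith) ha, sub_add_cancel]
  rw [← Icc_union_Ioc_eq_Icc ha hab, lintegral_union measurableSet_Ioc
    (disjoint_left.2 fun x hx hx' => hx'.1.not_ge hx.2), hb]
  set I₁ := ∫⁻ x in Icc 0 a, g x
  set I₂ := ∫⁻ x in Ioc a b, g x
  calc I₁ * (ENNReal.ofReal (b - a) + ENNReal.ofReal a)
      = ENNReal.ofReal (b - a) * I₁ + ENNReal.ofReal a * I₁ := by ring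
    _ ≤ ENNReal.ofReal (b - a) * (g a * ENNReal.ofReal a) + ENNReal.ofReal a * I₁ := by gcongr
    _ = ENNReal.ofReal a * (g a * ENNReal.ofReal (b - a)) + ENNReal.ofReal a * I₁ := by ring
    _ ≤ ENNReal.ofReal a * I₂ + ENNReal.ofReal a * I₁ := by gcongr
    _ = ENNReal.ofReal a * (I₁ + I₂) := by ring

lemma withDensity_Iic_mul_le_of_monotoneOn {g : ℝ → ℝ≥0∞} (hg : MonotoneOn g (Icc 0 1))
    {τ t : ℝ} (hτ : τ ∈ Ioc 0 1) (ht : t ≤ 1) :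
    (volume.restrict (Icc 0 1)).withDensity g (Iic (t * τ))
      ≤ ENNReal.ofReal t * (volume.restrict (Icc 0 1)).withDensity g (Iic τ) := by
  have hm : ∀ s ≤ 1,
      (volume.restrict (Icc 0 1)).withDensity g (Iic s) = ∫⁻ x in Icc 0 s, g x := by
    intro s hs
    rw [withDensity_apply _ measurableSet_Iic, Measure.restrict_restrict measurableSet_Iic]
    congr 2
    ext x
    exact ⟨fun h => ⟨h.2.1, h.1⟩, fun h => ⟨h.2, h.1, h.2.trans hs⟩⟩
  rcases le_or_gt t 0 with ht0 | ht0
  · calc (volume.restrict (Icc 0 1)).withDensity g (Iic (t * τ))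
        ≤ (volume.restrict (Icc 0 1)).withDensity g (Iic 0) :=
          measure_mono (Iic_subset_Iic.2 (mul_nonpos_of_nonpos_of_nonneg ht0 hτ.1.le))
      _ = 0 := by rw [hm 0 zero_le_one, Icc_self, setLIntegral_measure_zero _ _ (by simp)]
      _ ≤ _ := zero_le
  have hτ0 : ENNReal.ofReal τ ≠ 0 := ENNReal.ofReal_ne_zero_iff.2 hτ.1
  rw [hm _ (by nlinarith [hτ.1, hτ.2]), hm _ hτ.2,
    ← ENNReal.mul_le_mul_iff_left hτ0 ENNReal.ofReal_ne_top, mul_right_comm,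
    ← ENNReal.ofReal_mul ht0.le]
  exact lintegral_Icc_mul_le_of_monotoneOn (hg.mono (Icc_subset_Icc_right hτ.2))
    (mul_nonneg ht0.le hτ.1.le) (by nlinarith [hτ.1])

lemma superUniform_map_div_cond_Iic {m : Measure ℝ} {τ : ℝ} (hτ : 0 < τ)
    (h : ∀ t ≤ 1, m (Iic (t * τ)) ≤ ENNReal.ofReal t * m (Iic τ)) :
    SuperUniform ((m[|Iic τ]).map (· / τ)) := by
  intro t
  have hpre : (· / τ) ⁻¹' Iic t = Iic (t * τ) := by
    ext x
    simp [div_le_iff₀ hτ]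
  rw [Measure.map_apply (by fun_prop) measurableSet_Iic, hpre,
    cond_apply measurableSet_Iic, Iic_inter_Iic,
    show τ ⊓ t * τ = min 1 t * τ by rw [min_mul_of_nonneg _ _ hτ.le, one_mul]]
  calc (m (Iic τ))⁻¹ * m (Iic (min 1 t * τ))
      ≤ (m (Iic τ))⁻¹ * (ENNReal.ofReal (min 1 t) * m (Iic τ)) := by
        gcongr
        exact h _ (min_le_left _ _)
    _ = ENNReal.ofReal (min 1 t) * ((m (Iic τ))⁻¹ * m (Iic τ)) := by ring
    _ ≤ ENNReal.ofReal (min 1 t) := mul_le_of_le_one_right' (ENNReal.inv_mul_le_one _)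
    _ ≤ ENNReal.ofReal t := ENNReal.ofReal_le_ofReal (min_le_right _ _)

namespace ProbabilityTheory.iIndepFun

variable {ι Ω : Type*} [Fintype ι] [MeasurableSpace Ω] {μ : Measure Ω}

theorem map_cond_iInter_preimage {β : ι → Type*} [∀ i, MeasurableSpace (β i)]
    {X : ∀ i, Ω → β i} (hindep : iIndepFun X μ) (hX : ∀ i, Measurable (X i)) {s : ∀ i, Set (β i)}
    (hs : ∀ i, MeasurableSet (s i)) :
    (μ[|⋂ i, X i ⁻¹' s i]).map (fun ω i => X i ω) = Measure.pi fun i => (μ.map (X i))[|s i] := by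
  have := hindep.isProbabilityMeasure
  refine (Measure.pi_eq fun t ht => ?_).symm
  have hinter : (⋂ i, X i ⁻¹' s i) ∩ (fun ω i => X i ω) ⁻¹' univ.pi t =
      ⋂ i, X i ⁻¹' (s i ∩ t i) := by
    ext ω
    simp [forall_and]
  rw [Measure.map_apply (measurable_pi_lambda _ hX) (.univ_pi ht),
    cond_apply (.iInter fun i => hX i (hs i)), hinter,
    hindep.meas_iInter fun i => ⟨_, hs i, rfl⟩,
    hindep.meas_iInter fun i => ⟨_, (hs i).inter (ht i), rfl⟩,
    ENNReal.prod_inv_distrib fun i _ j _ _ => .inr (measure_ne_top _ _),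
    ← Finset.prod_mul_distrib]
  refine Finset.prod_congr rfl fun i _ => ?_
  rw [cond_apply (hs i), Measure.map_apply (hX i) (hs i),
    Measure.map_apply (hX i) ((hs i).inter (ht i)), preimage_inter]

theorem map_div_cond_forall_le {p : ι → Ω → ℝ} (hindep : iIndepFun p μ)
    (hp : ∀ i, Measurable (p i)) (τ : ι → ℝ) :
    (μ[|{ω | ∀ i, p i ω ≤ τ i}]).map (fun ω i => p i ω / τ i)
      = Measure.pi fun i => ((μ.map (p i))[|Iic (τ i)]).map (· / τ i) := by
  have hsel : {ω | ∀ i, p i ω ≤ τ i} = ⋂ i, p i ⁻¹' Iic (τ i) := by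
    ext ω
    simp
  rw [← Measure.pi_map_pi fun i => (measurable_div_const (τ i)).aemeasurable,
    ← hindep.map_cond_iInter_preimage hp fun i => measurableSet_Iic, ← hsel,
    Measure.map_map (by fun_prop) (measurable_pi_lambda _ hp)]
  rfl

end ProbabilityTheory.iIndepFun

noncomputable def erlangTail (k : ℕ) (x : ℝ) : ℝ :=
  exp (-x) * ∑ i ∈ Finset.range k, x ^ i / i !

/-- The Erlang formula exceeds `1` for `Q < 0`, and `k = 0` needs the value `1` at `Q = 0`. -/
noncomputable def chiSqTail (k : ℕ) (Q : ℝ) : ℝ :=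
  if Q ≤ 0 then 1 else erlangTail k (Q / 2)

section ErlangTail

variable {k : ℕ} {x : ℝ}

lemma erlangTail_zero_right (hk : k ≠ 0) : erlangTail k 0 = 1 := by
  obtain ⟨n, rfl⟩ := Nat.exists_eq_succ_of_ne_zero hk
  simp [erlangTail, Finset.sum_range_succ']

lemma erlangTail_succ (k : ℕ) (x : ℝ) :
    erlangTail (k + 1) x = erlangTail k x + exp (-x) * x ^ k / k ! := by
  simp only [erlangTail, Finset.sum_range_succ]
  ring

lemma erlangTail_nonneg (hx : 0 ≤ x) : 0 ≤ erlangTail k x := by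
  unfold erlangTail
  positivity

lemma erlangTail_le_one (hx : 0 ≤ x) : erlangTail k x ≤ 1 :=
  calc erlangTail k x ≤ exp (-x) * exp x :=
        mul_le_mul_of_nonneg_left (sum_le_exp_of_nonneg hx k) (exp_nonneg _)
    _ = 1 := by rw [← exp_add, neg_add_cancel, exp_zero]

lemma continuous_erlangTail (k : ℕ) : Continuous (erlangTail k) := by
  unfold erlangTail
  fun_prop

lemma hasDerivAt_erlangTail_succ (k : ℕ) (x : ℝ) :
    HasDerivAt (erlangTail (k + 1)) (-(exp (-x) * x ^ k / k !)) x := by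
  induction k with
  | zero =>
    have h : erlangTail 1 = fun y => exp (-y) := by
      funext y
      simp [erlangTail]
    rw [h]
    simpa using (hasDerivAt_neg x).exp
  | succ k ih =>
    have hterm : HasDerivAt (fun y => exp (-y) * y ^ (k + 1) / (k + 1) !)
        (-(exp (-x) * x ^ (k + 1) / (k + 1) !) + exp (-x) * x ^ k / k !) x := by
      refine (((hasDerivAt_neg x).exp.mul (hasDerivAt_pow (k + 1) x)).div_const
        ((k + 1) ! : ℝ)).congr_deriv ?_
      rw [Nat.factorial_succ]
      push_cast
      field_simp
    rw [show erlangTail (k + 2) = fun y => erlangTail (k + 1) y + exp (-y) * y ^ (k + 1) / (k + 1) !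
      from funext (erlangTail_succ _)]
    exact (ih.add hterm).congr_deriv (by ring)

lemma antitoneOn_erlangTail (k : ℕ) : AntitoneOn (erlangTail k) (Ici 0) := by
  rcases k with _ | k
  · intro a _ b _ _
    simp [erlangTail]
  refine antitoneOn_of_deriv_nonpos (convex_Ici 0) (continuous_erlangTail _).continuousOn
    (fun y _ => (hasDerivAt_erlangTail_succ k y).differentiableAt.differentiableWithinAt)
    fun y hy => ?_
  rw [interior_Ici] at hy
  rw [(hasDerivAt_erlangTail_succ k y).deriv, neg_nonpos]
  have : 0 < y := hy
  positivity

end ErlangTail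

section ChiSqTail

variable {k : ℕ} {Q : ℝ}

lemma chiSqTail_of_nonpos (hQ : Q ≤ 0) : chiSqTail k Q = 1 := if_pos hQ

lemma chiSqTail_of_pos (hQ : 0 < Q) : chiSqTail k Q = erlangTail k (Q / 2) := if_neg hQ.not_ge

lemma chiSqTail_nonneg (k : ℕ) (Q : ℝ) : 0 ≤ chiSqTail k Q := by
  unfold chiSqTail
  split_ifs with hQ
  · exact zero_le_one
  · exact erlangTail_nonneg (by linarith)

lemma chiSqTail_le_one (k : ℕ) (Q : ℝ) : chiSqTail k Q ≤ 1 := by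
  unfold chiSqTail
  split_ifs with hQ
  · exact le_rfl
  · exact erlangTail_le_one (by linarith)

lemma antitone_chiSqTail (k : ℕ) : Antitone (chiSqTail k) := by
  intro Q Q' hQQ'
  rcases le_or_gt Q' 0 with hQ' | hQ'
  · rw [chiSqTail_of_nonpos hQ', chiSqTail_of_nonpos (hQQ'.trans hQ')]
  rcases le_or_gt Q 0 with hQ | hQ
  · rw [chiSqTail_of_nonpos hQ]
    exact chiSqTail_le_one k Q'
  rw [chiSqTail_of_pos hQ, chiSqTail_of_pos hQ']
  exact antitoneOn_erlangTail k (mem_Ici.2 (by linarith)) (mem_Ici.2 (by linarith)) (by linarith)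

end ChiSqTail

section Gamma

variable {k : ℕ} {x : ℝ}

lemma gammaPDFReal_succ_half (hx : 0 ≤ x) :
    gammaPDFReal (k + 1 : ℕ) (1 / 2) x = exp (-(x / 2)) * (x / 2) ^ k / k ! / 2 := by
  rw [gammaPDFReal, if_pos hx, Nat.cast_succ, add_sub_cancel_right, rpow_natCast,
    Gamma_nat_eq_factorial, ← Nat.cast_succ, rpow_natCast, show -(1 / 2 * x) = -(x / 2) by ring]
  field_simp
  rw [pow_succ]
  ring

lemma hasDerivAt_neg_erlangTail_succ_half (k : ℕ) (x : ℝ) :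
    HasDerivAt (fun y => -erlangTail (k + 1) (y / 2))
      (exp (-(x / 2)) * (x / 2) ^ k / k ! / 2) x := by
  have h := (hasDerivAt_erlangTail_succ k (x / 2)).comp x ((hasDerivAt_id' x).div_const 2)
  exact h.neg.congr_deriv (by ring)

lemma gammaMeasure_Iio (hk : k ≠ 0) (Q : ℝ) :
    gammaMeasure k (1 / 2) (Iio Q) = ENNReal.ofReal (1 - chiSqTail k Q) := by
  rw [gammaMeasure, withDensity_apply _ measurableSet_Iio]
  rcases le_or_gt Q 0 with hQ | hQ
  · rw [lintegral_gammaPDF_of_nonpos hQ, chiSqTail_of_nonpos hQ, sub_self, ENNReal.ofReal_zero]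
  obtain ⟨n, rfl⟩ := Nat.exists_eq_succ_of_ne_zero hk
  set g : ℝ → ℝ := fun x => exp (-(x / 2)) * (x / 2) ^ n / n ! / 2
  have hg : Continuous g := by fun_prop
  have hsplit : Iio Q = Iio 0 ∪ Ico 0 Q := (Iio_union_Ico_eq_Iio hQ.le).symm
  rw [hsplit,
    lintegral_union measurableSet_Ico ((Iio_disjoint_Ici le_rfl).mono_right Ico_subset_Ici_self),
    lintegral_gammaPDF_of_nonpos le_rfl, zero_add,
    setLIntegral_congr_fun measurableSet_Ico (g := fun x => ENNReal.ofReal (g x))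
      fun x hx => by rw [gammaPDF, gammaPDFReal_succ_half hx.1],
    ← ofReal_integral_eq_lintegral_ofReal (hg.integrableOn_Icc.mono_set Ico_subset_Icc_self)
      ((ae_restrict_iff' measurableSet_Ico).2 (ae_of_all _ fun x hx => by
        have := hx.1; positivity)),
    integral_Ico_eq_integral_Ioo, ← integral_Ioc_eq_integral_Ioo,
    ← intervalIntegral.integral_of_le hQ.le,
    intervalIntegral.integral_eq_sub_of_hasDerivAt
      (fun x _ => hasDerivAt_neg_erlangTail_succ_half n x) (hg.intervalIntegrable 0 Q),
    chiSqTail_of_pos hQ, zero_div, erlangTail_zero_right n.succ_ne_zero]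
  congr 1
  ring

theorem gammaMeasure_Ici_eq_chiSqTail (hk : k ≠ 0) (Q : ℝ) :
    gammaMeasure k (1 / 2) (Ici Q) = ENNReal.ofReal (chiSqTail k Q) := by
  have : IsProbabilityMeasure (gammaMeasure k (1 / 2)) :=
    isProbabilityMeasure_gammaMeasure (by positivity) (by norm_num)
  rw [← compl_Iio, measure_compl measurableSet_Iio (measure_ne_top _ _), measure_univ,
    gammaMeasure_Iio hk, ← ENNReal.ofReal_one, ← ENNReal.ofReal_sub _ (by
      linarith [chiSqTail_le_one k Q]), sub_sub_cancel]

end Gamma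

/-- Extended by `1` to `x ≤ 0`, where `log` takes junk values, so that it is antitone in `x`. -/
noncomputable def shiftedChiSqTail (n : ℕ) (Q x : ℝ) : ℝ :=
  if x ≤ 0 then 1 else chiSqTail n (Q + 2 * log x)

lemma shiftedChiSqTail_nonneg (n : ℕ) (Q x : ℝ) : 0 ≤ shiftedChiSqTail n Q x := by
  unfold shiftedChiSqTail
  split_ifs
  exacts [zero_le_one, chiSqTail_nonneg _ _]

lemma chiSqTail_add_log_le_shiftedChiSqTail (n : ℕ) (Q x : ℝ) :
    chiSqTail n (Q + 2 * log x) ≤ shiftedChiSqTail n Q x := by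
  unfold shiftedChiSqTail
  split_ifs
  exacts [chiSqTail_le_one _ _, le_rfl]

lemma antitone_shiftedChiSqTail (n : ℕ) (Q : ℝ) : Antitone (shiftedChiSqTail n Q) := by
  intro x y hxy
  unfold shiftedChiSqTail
  split_ifs with hy hx hx
  · exact le_rfl
  · exact absurd (hxy.trans hy) hx
  · exact chiSqTail_le_one _ _
  · exact antitone_chiSqTail n (by linarith [log_le_log (not_le.1 hx) hxy])

lemma hasDerivAt_mul_erlangTail_succ_add_log (n : ℕ) (a : ℝ) {x : ℝ} (hx : 0 < x) :
    HasDerivAt (fun y => y * erlangTail (n + 1) (a + log y)) (erlangTail n (a + log x)) x := by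
  have h := (hasDerivAt_erlangTail_succ n (a + log x)).comp x
    ((hasDerivAt_log hx.ne').const_add a)
  refine ((hasDerivAt_id' x).mul h).congr_deriv ?_
  rw [Function.comp_apply, erlangTail_succ, exp_neg, exp_add, exp_log hx]
  field_simp
  ring

lemma integral_shiftedChiSqTail_of_pos {n : ℕ} {Q : ℝ} (hQ : 0 < Q) :
    ∫ x in (0)..1, shiftedChiSqTail n Q x = erlangTail (n + 1) (Q / 2) := by
  set c := exp (-(Q / 2))
  have hc : 0 < c := exp_pos _
  have hc1 : c ≤ 1 := exp_le_one_iff.2 (by linarith)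
  have hint : ∀ a b, IntervalIntegrable (shiftedChiSqTail n Q) volume a b :=
    fun _ _ => (antitone_shiftedChiSqTail n Q).intervalIntegrable
  have hlow : ∫ x in (0)..c, shiftedChiSqTail n Q x = c := by
    rw [intervalIntegral.integral_congr (g := fun _ => 1) fun x hx => ?_]
    · simp
    rw [uIcc_of_le hc.le] at hx
    unfold shiftedChiSqTail
    split_ifs with hx0
    · rfl
    · refine chiSqTail_of_nonpos ?_
      have := log_le_log (not_le.1 hx0) hx.2
      rw [log_exp] at this
      linarith
  have hhigh : ∫ x in c..1, shiftedChiSqTail n Q x = erlangTail (n + 1) (Q / 2) - c := by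
    have hderiv : ∀ x ∈ Icc c 1, HasDerivAt (fun y => y * erlangTail (n + 1) (Q / 2 + log y))
        (erlangTail n (Q / 2 + log x)) x :=
      fun x hx => hasDerivAt_mul_erlangTail_succ_add_log n _ (hc.trans_le hx.1)
    rw [intervalIntegral.integral_eq_sub_of_hasDerivAt_of_le hc1
      (fun x hx => (hderiv x hx).continuousAt.continuousWithinAt)
      (fun x hx => ?_) (hint c 1)]
    · rw [log_one, add_zero, log_exp, add_neg_cancel, erlangTail_zero_right n.succ_ne_zero,
        one_mul, mul_one]
    · have hx0 : 0 < x := hc.trans hx.1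
      have hpos : 0 < Q + 2 * log x := by
        have := log_lt_log hc hx.1
        rw [log_exp] at this
        linarith
      refine (hderiv x (Ioo_subset_Icc_self hx)).congr_deriv ?_
      rw [shiftedChiSqTail, if_neg hx0.not_ge, chiSqTail_of_pos hpos]
      ring_nf
  rw [← intervalIntegral.integral_add_adjacent_intervals (hint 0 c) (hint c 1), hlow, hhigh]
  ring

lemma lintegral_shiftedChiSqTail (n : ℕ) (Q : ℝ) :
    ∫⁻ x in Icc 0 1, ENNReal.ofReal (shiftedChiSqTail n Q x)
      = ENNReal.ofReal (chiSqTail (n + 1) Q) := by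
  rcases le_or_gt Q 0 with hQ | hQ
  · have hone : ∀ x ∈ Icc (0 : ℝ) 1, ENNReal.ofReal (shiftedChiSqTail n Q x) = 1 := by
      intro x hx
      rw [shiftedChiSqTail]
      split_ifs with hx0
      · exact ENNReal.ofReal_one
      · rw [chiSqTail_of_nonpos (by linarith [log_nonpos (not_le.1 hx0).le hx.2]),
          ENNReal.ofReal_one]
    rw [setLIntegral_congr_fun measurableSet_Icc hone]
    simp [chiSqTail_of_nonpos hQ]
  rw [← ofReal_integral_eq_lintegral_ofReal
      ((antitone_shiftedChiSqTail n Q).antitoneOn _ |>.integrableOn_isCompact isCompact_Icc)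
      (ae_of_all _ (shiftedChiSqTail_nonneg n Q)),
    integral_Icc_eq_integral_Ioc, ← intervalIntegral.integral_of_le zero_le_one,
    integral_shiftedChiSqTail_of_pos hQ, chiSqTail_of_pos hQ]

theorem measure_pi_fisher_tail_le_chiSqTail {n : ℕ} (ρ : Fin n → Measure ℝ)
    [∀ j, IsZeroOrProbabilityMeasure (ρ j)] (hρ : ∀ j, SuperUniform (ρ j)) (Q : ℝ) :
    Measure.pi ρ {y | Q ≤ -2 * ∑ j, log (y j)} ≤ ENNReal.ofReal (chiSqTail n Q) := by
  induction n generalizing Q with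
  | zero =>
    rcases le_or_gt Q 0 with hQ | hQ
    · rw [chiSqTail_of_nonpos hQ, ENNReal.ofReal_one]
      exact (measure_mono (subset_univ _)).trans_eq (by simp)
    · simp [not_le.2 hQ]
  | succ n ih =>
    set E := {q : ℝ × (Fin n → ℝ) | Q ≤ -2 * (log q.1 + ∑ j, log (q.2 j))}
    have hE : MeasurableSet E := measurableSet_le measurable_const (by fun_prop)
    have hpre : {y : Fin (n + 1) → ℝ | Q ≤ -2 * ∑ j, log (y j)} =
        MeasurableEquiv.piFinSuccAbove (fun _ => ℝ) 0 ⁻¹' E := by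
      ext y
      simp [E, Fin.sum_univ_succ, Fin.tail]
    have hsection : ∀ x : ℝ, Prod.mk x ⁻¹' E = {z | Q + 2 * log x ≤ -2 * ∑ j, log (z j)} := by
      intro x
      ext z
      simp only [E, mem_preimage, mem_ofPred_eq]
      constructor <;> intro h <;> linarith
    rw [hpre, (measurePreserving_piFinSuccAbove ρ 0).measure_preimage hE.nullMeasurableSet,
      Measure.prod_apply hE]
    calc ∫⁻ x, Measure.pi (fun j => ρ (Fin.succAbove 0 j)) (Prod.mk x ⁻¹' E) ∂ρ 0
        ≤ ∫⁻ x, ENNReal.ofReal (shiftedChiSqTail n Q x) ∂ρ 0 := lintegral_mono fun x => by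
          rw [hsection]
          exact (ih _ (fun j => hρ _) _).trans
            (ENNReal.ofReal_le_ofReal (chiSqTail_add_log_le_shiftedChiSqTail n Q x))
      _ ≤ ∫⁻ x in Icc 0 1, ENNReal.ofReal (shiftedChiSqTail n Q x) :=
        (hρ 0).lintegral_le_of_antitone (antitone_shiftedChiSqTail n Q)
          (shiftedChiSqTail_nonneg n Q)
      _ = ENNReal.ofReal (chiSqTail (n + 1) Q) := lintegral_shiftedChiSqTail n Q

theorem truncated_fisher_validity_general
    {Ω : Type*} [MeasurableSpace Ω] (μpr : Measure Ω)
    (k : ℕ) (hk : 1 ≤ k)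
    (p : Fin k → Ω → ℝ) (hmeas : ∀ j, Measurable (p j))
    (hindep : iIndepFun p μpr)
    (f : Fin k → ℝ → ℝ)
    (hmono : ∀ j, MonotoneOn (f j) (Set.Icc (0:ℝ) 1))
    (hdens : ∀ j, μpr.map (p j)
      = (volume.restrict (Set.Icc (0:ℝ) 1)).withDensity (fun x => ENNReal.ofReal (f j x)))
    (τ : Fin k → ℝ) (hτ : ∀ j, τ j ∈ Set.Ioc (0:ℝ) 1)
    (Sel : Set Ω) (hSel : Sel = {ω | ∀ j, p j ω ≤ τ j}) :
    (∀ t : Fin k → ℝ, (∀ j, t j ∈ Set.Icc (0:ℝ) 1) →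
      μpr[|Sel] {ω | ∀ j, p j ω / τ j ≤ t j} ≤ ENNReal.ofReal (∏ j, t j)) ∧
    (∀ Q : ℝ,
      μpr[|Sel] {ω | Q ≤ -2 * ∑ j, Real.log (p j ω / τ j)}
        ≤ gammaMeasure k (1/2) (Set.Ici Q)) := by
  set ρ : Fin k → Measure ℝ := fun j => ((μpr.map (p j))[|Iic (τ j)]).map (· / τ j)
  have hρ : ∀ j, SuperUniform (ρ j) := fun j =>
    superUniform_map_div_cond_Iic (hτ j).1 fun t ht => by
      rw [hdens j]
      exact withDensity_Iic_mul_le_of_monotoneOn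
        (ENNReal.ofReal_mono.comp_monotoneOn (hmono j)) (hτ j) ht
  have hrescale : Measurable fun ω j => p j ω / τ j := by fun_prop
  have hlaw : (μpr[|Sel]).map (fun ω j => p j ω / τ j) = Measure.pi ρ := by
    rw [hSel]
    exact hindep.map_div_cond_forall_le hmeas τ
  refine ⟨fun t ht => ?_, fun Q => ?_⟩
  · calc μpr[|Sel] {ω | ∀ j, p j ω / τ j ≤ t j}
        = Measure.pi ρ (univ.pi fun j => Iic (t j)) := by
          rw [← hlaw, Measure.map_apply hrescale (.univ_pi fun _ => measurableSet_Iic)]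
          congr 1
          ext ω
          simp [Pi.le_def]
      _ ≤ ENNReal.ofReal (∏ j, t j) := measure_pi_univ_pi_Iic_le hρ fun j => (ht j).1
  · calc μpr[|Sel] {ω | Q ≤ -2 * ∑ j, Real.log (p j ω / τ j)}
        = Measure.pi ρ {y | Q ≤ -2 * ∑ j, Real.log (y j)} := by
          rw [← hlaw, Measure.map_apply hrescale (measurableSet_le measurable_const (by fun_prop))]
          rfl
      _ ≤ ENNReal.ofReal (chiSqTail k Q) := measure_pi_fisher_tail_le_chiSqTail ρ hρ Q
      _ = gammaMeasure k (1 / 2) (Ici Q) := (gammaMeasure_Ici_eq_chiSqTail (by omega) Q).symm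

/-- Truncated Fisher combination: conditional on all `p_j ≤ τ_j`, the
rescaled p-values `p_j/τ_j` are jointly super-uniform, and Fisher's statistic
`−2∑log(p_j/τ_j)` is stochastically dominated by a `χ²_{2k}` distribution
(the Gamma distribution with shape `k` and rate `1/2`). -/
theorem truncated_fisher_validity
    {Ω : Type*} [MeasurableSpace Ω] (μpr : Measure Ω) [IsProbabilityMeasure μpr]
    (k : ℕ) (hk : 1 ≤ k)
    (p : Fin k → Ω → ℝ) (hmeas : ∀ j, Measurable (p j))
    (hindep : iIndepFun p μpr)
    (f : Fin k → ℝ → ℝ)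
    (hmono : ∀ j, MonotoneOn (f j) (Set.Icc (0:ℝ) 1))
    (hf_nonneg : ∀ j, ∀ x ∈ Set.Icc (0:ℝ) 1, 0 ≤ f j x)
    (hdens : ∀ j, μpr.map (p j)
      = (volume.restrict (Set.Icc (0:ℝ) 1)).withDensity (fun x => ENNReal.ofReal (f j x)))
    (τ : Fin k → ℝ) (hτ : ∀ j, τ j ∈ Set.Ioc (0:ℝ) 1)
    (Sel : Set Ω) (hSel : Sel = {ω | ∀ j, p j ω ≤ τ j})
    (hpos : 0 < μpr Sel) :
    (∀ t : Fin k → ℝ, (∀ j, t j ∈ Set.Icc (0:ℝ) 1) →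
      μpr[|Sel] {ω | ∀ j, p j ω / τ j ≤ t j} ≤ ENNReal.ofReal (∏ j, t j)) ∧
    (∀ Q : ℝ,
      μpr[|Sel] {ω | Q ≤ -2 * ∑ j, Real.log (p j ω / τ j)}
        ≤ gammaMeasure k (1/2) (Set.Ici Q)) :=
  truncated_fisher_validity_general μpr k hk p hmeas hindep f hmono hdens τ hτ Sel hSel
end
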